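/- arXiv:2605.10861 — 5 statements merged into one kernel-verified Lean document; each statement's English description precedes it below -/
import Mathlib

section
/- If 1 ≤ l1 ≤ l2 ≤ l3 and the parity of l1 is different from the parity of l2 and also different from the parity of l3, then the theta graph Θ(l1,l2,l3) is enumeratively chromatic-choosable; that is, P_ℓ(Θ(l1,l2,l3),m) = P(Θ(l1,l2,l3),m) for every m ∈ ℕ. -/
open SimpleGraph Finset

/-- A proper `L`-coloring of `G`: each vertex gets a color from its list and adjacent
vertices get different colors. -/
def ProperLColoring {V : Type*} (G : SimpleGraph V) (L : V → Finset ℕ) (f : V → ℕ) : Prop :=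
  (∀ v, f v ∈ L v) ∧ ∀ ⦃u w⦄, G.Adj u w → f u ≠ f w

/-- `P(G,L)`: the number of proper `L`-colorings of `G`. -/
noncomputable def PList {V : Type*} (G : SimpleGraph V) (L : V → Finset ℕ) : ℕ :=
  Nat.card {f : V → ℕ // ProperLColoring G L f}

/-- `P(G,m)`: the number of proper colorings of `G` with colors from `{1, …, m}`. -/
noncomputable def PChrom {V : Type*} (G : SimpleGraph V) (m : ℕ) : ℕ :=
  PList G (fun _ => Finset.Icc 1 m)

/-- The list color function `P_ℓ(G,m)`: the minimum of `P(G,L)` over all `m`-assignments. -/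
noncomputable def PListFn {V : Type*} (G : SimpleGraph V) (m : ℕ) : ℕ :=
  sInf {n | ∃ L : V → Finset ℕ, (∀ v, (L v).card = m) ∧ n = PList G L}

/-- `G` is enumeratively chromatic-choosable: `P_ℓ(G,m) = P(G,m)` for all `m ∈ ℕ = {1,2,…}`. -/
def EnumChromChoosable {V : Type*} (G : SimpleGraph V) : Prop :=
  ∀ m : ℕ, 1 ≤ m → PListFn G m = PChrom G m

/-- Vertices of the theta graph `Θ(l1,l2,l3)`: the end vertices `u = Sum.inl false` and
`v = Sum.inl true`, together with the `lᵢ - 1` internal vertices of the `i`-th path. -/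
abbrev ThetaVert (l1 l2 l3 : ℕ) : Type :=
  Bool ⊕ (Σ i : Fin 3, Fin (![l1, l2, l3] i - 1))

/-- Edges of the theta graph (up to symmetrization): the internal vertices of the `i`-th path,
in order, form a path from `u` to `v`; if some path has length 1 then `u` and `v` are adjacent. -/
def thetaRel (l1 l2 l3 : ℕ) : ThetaVert l1 l2 l3 → ThetaVert l1 l2 l3 → Prop :=
  fun a b =>
    match a, b with
    | Sum.inl false, Sum.inl true => l1 = 1 ∨ l2 = 1 ∨ l3 = 1
    | Sum.inl false, Sum.inr ⟨_, j⟩ => (j : ℕ) = 0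
    | Sum.inr ⟨i, j⟩, Sum.inl true => (j : ℕ) + 2 = ![l1, l2, l3] i
    | Sum.inr ⟨i, j⟩, Sum.inr ⟨i', j'⟩ => i = i' ∧ (j : ℕ) + 1 = (j' : ℕ)
    | _, _ => False

/-- The theta graph `Θ(l1,l2,l3)`: two end vertices joined by three internally disjoint
paths of lengths `l1`, `l2`, `l3`. -/
def thetaGraph (l1 l2 l3 : ℕ) : SimpleGraph (ThetaVert l1 l2 l3) :=
  SimpleGraph.fromRel (thetaRel l1 l2 l3)

/-- A DP-cover `(L, H)` of `G`. -/
structure DPCover {V : Type*} (G : SimpleGraph V) (W : Type*) where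
  H : SimpleGraph W
  L : V → Set W
  partition : ∀ w : W, ∃! v : V, w ∈ L v
  matching : ∀ ⦃u v : V⦄, G.Adj u v → ∀ ⦃x y y' : W⦄, x ∈ L u → y ∈ L v → y' ∈ L v →
      H.Adj x y → H.Adj x y' → y = y'
  cross : ∀ ⦃x y : W⦄, H.Adj x y → ∃ u v, G.Adj u v ∧ x ∈ L u ∧ y ∈ L v

/-- A proper `H`-coloring: an independent transversal of the cover. -/
def DPCover.IsProperColoring {V W : Type*} {G : SimpleGraph V} (C : DPCover G W)
    (T : Set W) : Prop :=
  (∀ v : V, ∃! w : W, w ∈ T ∧ w ∈ C.L v) ∧ ∀ ⦃x y⦄, x ∈ T → y ∈ T → ¬ C.H.Adj x y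

/-- `P_DP(G, H)`: the number of proper `H`-colorings of `G`. -/
noncomputable def PDPCount {V W : Type*} {G : SimpleGraph V} (C : DPCover G W) : ℕ :=
  Nat.card {T : Set W // C.IsProperColoring T}

/-- The DP color function `P_DP(G,m)`: the minimum of `P_DP(G,H)` over all `m`-fold covers. -/
noncomputable def PDP {V : Type*} (G : SimpleGraph V) (m : ℕ) : ℕ :=
  sInf {n | ∃ (W : Type) (C : DPCover G W), (∀ v, Nat.card ↥(C.L v) = m) ∧ n = PDPCount C}

/-- A cover is full if the matching between the lists of adjacent vertices is perfect. -/
def DPCover.IsFull {V W : Type*} {G : SimpleGraph V} (C : DPCover G W) : Prop :=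
  ∀ ⦃u v : V⦄, G.Adj u v → ∀ x ∈ C.L u, ∃! y, y ∈ C.L v ∧ C.H.Adj x y
namespace ThetaAux

open Finset


/-- Count of proper list colorings of the internal vertices of a path with `k` internal
vertices whose endpoints are colored `c` and `d`. -/
def qCount : (k : ℕ) → (Fin k → Finset ℕ) → ℕ → ℕ → ℕ
  | 0, _, c, d => if c = d then 0 else 1
  | (k+1), Ls, c, d =>
      ∑ a ∈ (Ls (Fin.last k)).erase d, qCount k (fun j => Ls j.castSucc) c a

def ABk (m : ℕ) : ℕ → ℕ × ℕ
  | 0 => (0, 1)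
  | (k+1) => ((m-1) * (ABk m k).2, (m-2) * (ABk m k).2 + (ABk m k).1)

def Ak (m k : ℕ) : ℕ := (ABk m k).1
def Bk (m k : ℕ) : ℕ := (ABk m k).2

lemma Ak_zero (m : ℕ) : Ak m 0 = 0 := rfl
lemma Bk_zero (m : ℕ) : Bk m 0 = 1 := rfl
lemma Ak_succ (m k : ℕ) : Ak m (k+1) = (m-1) * Bk m k := rfl
lemma Bk_succ (m k : ℕ) : Bk m (k+1) = (m-2) * Bk m k + Ak m k := rfl

lemma AB_parity (m : ℕ) (hm : 2 ≤ m) :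
    ∀ k, (k % 2 = 0 → Ak m k + 1 = Bk m k) ∧ (k % 2 = 1 → Ak m k = Bk m k + 1) := by
  intro k
  induction k with
  | zero => simp [Ak_zero, Bk_zero]
  | succ k ih =>
    have hm1 : m - 1 = (m - 2) + 1 := by omega
    constructor
    · intro hk
      have hk' : k % 2 = 1 := by omega
      have h := ih.2 hk'
      rw [Ak_succ, Bk_succ, h, hm1]
      ring
    · intro hk
      have hk' : k % 2 = 0 := by omega
      have h := ih.1 hk'
      rw [Ak_succ, Bk_succ, ← h, hm1]
      ring

lemma Bk_pos (m : ℕ) (hm : 3 ≤ m) : ∀ k, 1 ≤ Bk m k := by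
  intro k
  induction k with
  | zero => simp [Bk_zero]
  | succ k ih =>
    rw [Bk_succ]
    have : 1 * Bk m k ≤ (m-2) * Bk m k := by
      apply Nat.mul_le_mul_right; omega
    omega

lemma Bk_mono (m : ℕ) (hm : 3 ≤ m) {k k' : ℕ} (h : k ≤ k') : Bk m k ≤ Bk m k' := by
  induction k' with
  | zero => simpa [Nat.le_zero.mp h]
  | succ k' ih =>
    rcases Nat.lt_or_ge k (k'+1) with h' | h'
    · have : Bk m k' ≤ Bk m (k'+1) := by
        rw [Bk_succ]
        have : 1 * Bk m k' ≤ (m-2) * Bk m k' := by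
          apply Nat.mul_le_mul_right; omega
        omega
      exact le_trans (ih (by omega)) this
    · have : k = k' + 1 := by omega
      simp [this]

lemma Bk_succ_of_odd (m : ℕ) (hm : 2 ≤ m) {k : ℕ} (hk : k % 2 = 1) :
    Bk m k + 1 ≤ Bk m (k+1) := by
  have h := (AB_parity m hm k).2 hk
  rw [Bk_succ, h]
  have : 0 * Bk m k ≤ (m-2) * Bk m k := Nat.mul_le_mul_right _ (by omega)
  omega

lemma m2_vanish : ∀ k, (k % 2 = 0 → Ak 2 k = 0) ∧ (k % 2 = 1 → Bk 2 k = 0) := by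
  intro k
  induction k with
  | zero => simp [Ak_zero]
  | succ k ih =>
    constructor
    · intro hk
      have hk' : k % 2 = 1 := by omega
      rw [Ak_succ]
      have := ih.2 hk'
      simp [this]
    · intro hk
      have hk' : k % 2 = 0 := by omega
      rw [Bk_succ]
      have := ih.1 hk'
      simp [this]

lemma m1_vanish : ∀ k, Ak 1 k = 0 := by
  intro k
  cases k with
  | zero => rfl
  | succ k => rw [Ak_succ]; simp

/- sum helpers -/

lemma helper3 {s : Finset ℕ} {f : ℕ → ℕ} {b : ℕ} (h : ∀ a ∈ s, b ≤ f a) :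
    s.card * b ≤ ∑ a ∈ s, f a := by
  calc s.card * b = ∑ _a ∈ s, b := by rw [Finset.sum_const, smul_eq_mul]
  _ ≤ ∑ a ∈ s, f a := Finset.sum_le_sum h

lemma helper1 {s : Finset ℕ} {f : ℕ → ℕ} {A d0 : ℕ}
    (hlow : ∀ a ∈ s, A ≤ f a) (hgood : ∀ a ∈ s, a ≠ d0 → A + 1 ≤ f a) :
    s.card * (A + 1) ≤ (∑ a ∈ s, f a) + 1 := by
  by_cases hd : d0 ∈ s
  · rw [← Finset.add_sum_erase _ _ hd]
    have h1 : (s.erase d0).card * (A+1) ≤ ∑ a ∈ s.erase d0, f a :=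
      helper3 fun a ha => hgood a (Finset.mem_of_mem_erase ha) (Finset.ne_of_mem_erase ha)
    have h2 : A ≤ f d0 := hlow _ hd
    have h3 : (s.erase d0).card = s.card - 1 := Finset.card_erase_of_mem hd
    obtain ⟨t, ht⟩ : ∃ t, s.card = t + 1 :=
      ⟨s.card - 1, by have := Finset.card_pos.mpr ⟨d0, hd⟩; omega⟩
    rw [h3, ht] at h1
    rw [ht]
    simp only [Nat.add_sub_cancel] at h1
    have : (t+1) * (A+1) = t * (A+1) + (A+1) := by ring
    omega
  · have := helper3 (b := A + 1) (s := s) (f := f)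
      (fun a ha => hgood a ha (fun h => hd (h ▸ ha)))
    omega

lemma helper2 {s : Finset ℕ} {f : ℕ → ℕ} {b g : ℕ}
    (hlow : ∀ a ∈ s, b ≤ f a) (hg : g ∈ s) (hgb : b + 1 ≤ f g) :
    s.card * b + 1 ≤ ∑ a ∈ s, f a := by
  rw [← Finset.add_sum_erase _ _ hg]
  have h1 : (s.erase g).card * b ≤ ∑ a ∈ s.erase g, f a :=
    helper3 fun a ha => hlow a (Finset.mem_of_mem_erase ha)
  have h3 : (s.erase g).card = s.card - 1 := Finset.card_erase_of_mem hg
  obtain ⟨t, ht⟩ : ∃ t, s.card = t + 1 :=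
    ⟨s.card - 1, by have := Finset.card_pos.mpr ⟨g, hg⟩; omega⟩
  rw [h3, ht] at h1
  rw [ht]
  simp only [Nat.add_sub_cancel] at h1
  have : (t+1) * b = t * b + b := by ring
  omega


theorem qCount_inv (m : ℕ) (hm : 3 ≤ m) :
    ∀ k (Ls : Fin k → Finset ℕ), (∀ j, (Ls j).card = m) → ∀ c : ℕ,
    (k % 2 = 0 → (∀ d, Ak m k ≤ qCount k Ls c d) ∧
        ∃ d0, ∀ d, d ≠ d0 → Bk m k ≤ qCount k Ls c d) ∧
    (k % 2 = 1 → (∀ d, Bk m k ≤ qCount k Ls c d) ∧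
        ∃ D : Finset ℕ, D.card ≤ m - 1 ∧ ∀ d, d ∉ D → Bk m k + 1 ≤ qCount k Ls c d) := by
  intro k
  induction k with
  | zero =>
    intro Ls _ c
    refine ⟨fun _ => ⟨fun d => Nat.zero_le _, ⟨c, fun d hd => ?_⟩⟩, fun h => by omega⟩
    simp [qCount, Bk_zero, Ne.symm hd]
  | succ k ih =>
    intro Ls hLs c
    set Ls' : Fin k → Finset ℕ := fun j => Ls j.castSucc with hLs'
    have hLs'card : ∀ j, (Ls' j).card = m := fun j => hLs _
    have hlast : (Ls (Fin.last k)).card = m := hLs _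
    have hq : ∀ d, qCount (k+1) Ls c d
        = ∑ a ∈ (Ls (Fin.last k)).erase d, qCount k Ls' c a := fun d => rfl
    have hcard_erase : ∀ d : ℕ, m - 1 ≤ ((Ls (Fin.last k)).erase d).card := by
      intro d
      have := Finset.card_erase_le (s := Ls (Fin.last k)) (a := d)
      have h2 := Finset.pred_card_le_card_erase (s := Ls (Fin.last k)) (a := d)
      omega
    have IH := ih Ls' hLs'card c
    constructor
    · -- k+1 even, so k odd
      intro hpar
      have hk : k % 2 = 1 := by omega
      obtain ⟨hBlow, D, hDcard, hDgood⟩ := IH.2 hk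
      have hBpos := Bk_pos m hm k
      have hApar : Ak m k = Bk m k + 1 := (AB_parity m (by omega) k).2 hk
      have hAval : Ak m (k+1) = (m-1) * Bk m k := Ak_succ m k
      have hBval : Bk m (k+1) = (m-1) * Bk m k + 1 := by
        rw [Bk_succ, hApar]
        have : m - 1 = (m-2) + 1 := by omega
        rw [this]; ring
      constructor
      · intro d
        rw [hq, hAval]
        calc (m-1) * Bk m k = Bk m k * (m-1) := by ring
        _ ≤ Bk m k * ((Ls (Fin.last k)).erase d).card :=
            Nat.mul_le_mul_left _ (hcard_erase d)
        _ = ((Ls (Fin.last k)).erase d).card * Bk m k := by ring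
        _ ≤ _ := helper3 fun a _ => hBlow a
      · -- pick a good color in the last list
        have hGne : ((Ls (Fin.last k)) \ D).Nonempty := by
          rw [← Finset.card_pos]
          have := Finset.le_card_sdiff D (Ls (Fin.last k))
          omega
        obtain ⟨g, hg⟩ := hGne
        rw [Finset.mem_sdiff] at hg
        refine ⟨g, fun d hd => ?_⟩
        rw [hq, hBval]
        have hgmem : g ∈ (Ls (Fin.last k)).erase d := Finset.mem_erase.mpr ⟨?_, hg.1⟩
        · have h2 := helper2 (f := qCount k Ls' c) (fun a _ => hBlow a) hgmem
            (hDgood g hg.2)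
          have h3 : (m-1) * Bk m k ≤ ((Ls (Fin.last k)).erase d).card * Bk m k :=
            Nat.mul_le_mul_right _ (hcard_erase d)
          omega
        · exact fun h => hd (h ▸ rfl)
    · -- k+1 odd, so k even
      intro hpar
      have hk : k % 2 = 0 := by omega
      obtain ⟨hAlow, d0, hd0⟩ := IH.1 hk
      have hBpos := Bk_pos m hm k
      have hApar : Ak m k + 1 = Bk m k := (AB_parity m (by omega) k).1 hk
      have hBval : Bk m (k+1) + 1 = (m-1) * Bk m k := by
        rw [Bk_succ, ← hApar]
        have : m - 1 = (m-2) + 1 := by omega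
        rw [this]; ring
      have key1 : ∀ d, (((Ls (Fin.last k)).erase d).card) * Bk m k
          ≤ (∑ a ∈ (Ls (Fin.last k)).erase d, qCount k Ls' c a) + 1 := by
        intro d
        have := helper1 (s := (Ls (Fin.last k)).erase d) (f := qCount k Ls' c) (d0 := d0) (A := Ak m k)
          (fun a _ => hAlow a) (fun a _ ha => by rw [hApar]; exact hd0 a ha)
        rwa [hApar] at this
      constructor
      · intro d
        rw [hq]
        have h1 := key1 d
        have h3 : (m-1) * Bk m k ≤ ((Ls (Fin.last k)).erase d).card * Bk m k :=
          Nat.mul_le_mul_right _ (hcard_erase d)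
        omega
      · by_cases hd0L : d0 ∈ Ls (Fin.last k)
        · refine ⟨(Ls (Fin.last k)).erase d0, by rw [Finset.card_erase_of_mem hd0L]; omega,
            fun d hd => ?_⟩
          rw [hq, hBval]
          by_cases hdd0 : d = d0
          · subst hdd0
            refine le_trans ?_ (helper3 (b := Bk m k)
              (fun a ha => hd0 a (Finset.ne_of_mem_erase ha)))
            exact Nat.mul_le_mul_right _ (hcard_erase d)
          · have hdL : d ∉ Ls (Fin.last k) := by
              intro hmem
              exact hd (Finset.mem_erase.mpr ⟨hdd0, hmem⟩)
            have herase : (Ls (Fin.last k)).erase d = Ls (Fin.last k) :=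
              Finset.erase_eq_of_notMem hdL
            have h1 := key1 d
            rw [herase, hlast] at h1
            rw [herase]
            have hble : Bk m k ≤ m * Bk m k := Nat.le_mul_of_pos_left _ (by omega)
            have hmul : (m-1) * Bk m k + Bk m k = m * Bk m k := by
              rw [Nat.sub_one_mul]; omega
            omega
        · refine ⟨∅, by simp, fun d _ => ?_⟩
          rw [hq, hBval]
          have : ∀ a ∈ (Ls (Fin.last k)).erase d, Bk m k ≤ qCount k Ls' c a := by
            intro a ha
            refine hd0 a fun h => hd0L ?_
            exact h ▸ (Finset.mem_of_mem_erase ha)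
          refine le_trans ?_ (helper3 this)
          exact Nat.mul_le_mul_right _ (hcard_erase d)


lemma qCount_uniform (m : ℕ) :
    ∀ k (c d : ℕ), c ∈ Finset.Icc 1 m → d ∈ Finset.Icc 1 m →
      qCount k (fun _ => Finset.Icc 1 m) c d = if c = d then Ak m k else Bk m k := by
  intro k
  induction k with
  | zero =>
    intro c d _ _
    by_cases h : c = d <;> simp [qCount, h, Ak_zero, Bk_zero]
  | succ k ih =>
    intro c d hc hd
    have hIcc : (Finset.Icc 1 m).card = m := by rw [Nat.card_Icc]; omega
    have hq : qCount (k+1) (fun _ => Finset.Icc 1 m) c d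
        = ∑ a ∈ (Finset.Icc 1 m).erase d, qCount k (fun _ => Finset.Icc 1 m) c a := rfl
    rw [hq]
    have hval : ∀ a ∈ (Finset.Icc 1 m).erase d,
        qCount k (fun _ => Finset.Icc 1 m) c a = if c = a then Ak m k else Bk m k :=
      fun a ha => ih c a hc (Finset.mem_of_mem_erase ha)
    rw [Finset.sum_congr rfl hval]
    by_cases h : c = d
    · subst h
      have : ∀ a ∈ (Finset.Icc 1 m).erase c, (if c = a then Ak m k else Bk m k) = Bk m k := by
        intro a ha
        rw [if_neg (fun hh => (Finset.ne_of_mem_erase ha) hh.symm)]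
      rw [Finset.sum_congr rfl this, Finset.sum_const, smul_eq_mul,
        Finset.card_erase_of_mem hc, hIcc, if_pos rfl, Ak_succ]
    · have hcmem : c ∈ (Finset.Icc 1 m).erase d := Finset.mem_erase.mpr ⟨h, hc⟩
      rw [← Finset.add_sum_erase _ _ hcmem, if_pos rfl]
      have : ∀ a ∈ ((Finset.Icc 1 m).erase d).erase c,
          (if c = a then Ak m k else Bk m k) = Bk m k := by
        intro a ha
        rw [if_neg (fun hh => (Finset.ne_of_mem_erase ha) hh.symm)]
      rw [Finset.sum_congr rfl this, Finset.sum_const, smul_eq_mul,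
        Finset.card_erase_of_mem hcmem, Finset.card_erase_of_mem hd, hIcc,
        if_neg h, Bk_succ]
      have h9 : m - 1 - 1 = m - 2 := by omega
      rw [h9]
      ring

lemma sum_diag_split (s : Finset ℕ) (x y : ℕ) :
    ∑ c ∈ s, ∑ d ∈ s, (if c = d then x else y)
      = s.card * x + s.card * ((s.card - 1) * y) := by
  have hinner : ∀ c ∈ s, ∑ d ∈ s, (if c = d then x else y) = x + (s.card - 1) * y := by
    intro c hc
    rw [← Finset.add_sum_erase _ _ hc, if_pos rfl]
    congr 1
    have : ∀ d ∈ s.erase c, (if c = d then x else y) = y :=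
      fun d hd => if_neg (fun hh => (Finset.ne_of_mem_erase hd) hh.symm)
    rw [Finset.sum_congr rfl this, Finset.sum_const, smul_eq_mul,
      Finset.card_erase_of_mem hc]
  rw [Finset.sum_congr rfl hinner, Finset.sum_add_distrib, Finset.sum_const,
    Finset.sum_const, smul_eq_mul, smul_eq_mul]


lemma sum_extract1 {T : Finset ℕ} {y : ℕ → ℕ} {x : ℕ} (v : ℕ) (hx : x ∈ T)
    (hrest : ∀ d ∈ T, d ≠ x → y d = v) :
    ∑ d ∈ T, y d = y x + (T.card - 1) * v := by
  rw [← Finset.add_sum_erase _ _ hx, ← Finset.card_erase_of_mem hx]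
  congr 1
  rw [Finset.sum_congr rfl (fun d hd =>
    hrest d (Finset.mem_of_mem_erase hd) (Finset.ne_of_mem_erase hd))]
  rw [Finset.sum_const, smul_eq_mul]

lemma sum_extract2 {T : Finset ℕ} {y : ℕ → ℕ} {x x' : ℕ} (v : ℕ) (hx : x ∈ T) (hx' : x' ∈ T)
    (hne : x ≠ x') (hrest : ∀ d ∈ T, d ≠ x → d ≠ x' → y d = v) :
    ∑ d ∈ T, y d = y x + y x' + (T.card - 2) * v := by
  rw [← Finset.add_sum_erase _ _ hx]
  have hx'e : x' ∈ T.erase x := Finset.mem_erase.mpr ⟨Ne.symm hne, hx'⟩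
  rw [sum_extract1 v hx'e (fun d hd hdx' =>
    hrest d (Finset.mem_of_mem_erase hd) (Finset.ne_of_mem_erase hd) hdx')]
  rw [Finset.card_erase_of_mem hx]
  have h9 : T.card - 1 - 1 = T.card - 2 := by omega
  rw [h9]; ring

lemma sum_extract3 {T : Finset ℕ} {y : ℕ → ℕ} {x x' x'' : ℕ} (v : ℕ) (hx : x ∈ T) (hx' : x' ∈ T)
    (hx'' : x'' ∈ T) (h1 : x ≠ x') (h2 : x ≠ x'') (h3 : x' ≠ x'')
    (hrest : ∀ d ∈ T, d ≠ x → d ≠ x' → d ≠ x'' → y d = v) :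
    ∑ d ∈ T, y d = y x + y x' + y x'' + (T.card - 3) * v := by
  rw [← Finset.add_sum_erase _ _ hx]
  have hx'e : x' ∈ T.erase x := Finset.mem_erase.mpr ⟨Ne.symm h1, hx'⟩
  have hx''e : x'' ∈ T.erase x := Finset.mem_erase.mpr ⟨Ne.symm h2, hx''⟩
  rw [sum_extract2 v hx'e hx''e h3 (fun d hd h h' =>
    hrest d (Finset.mem_of_mem_erase hd) (Finset.ne_of_mem_erase hd) h h')]
  rw [Finset.card_erase_of_mem hx]
  have h9 : T.card - 1 - 2 = T.card - 3 := by omega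
  rw [h9]; ring

lemma rowO {m : ℕ} (hm : 3 ≤ m) {T : Finset ℕ} (hT : T.card = m)
    (N1 N2 N3 : ℕ → ℕ) (a1 b2 b3 : ℕ) (d0 g2 g3 : ℕ)
    (hg2T : g2 ∈ T) (hg3T : g3 ∈ T)
    (h1low : ∀ d ∈ T, a1 ≤ N1 d) (h1good : ∀ d ∈ T, d ≠ d0 → a1 + 1 ≤ N1 d)
    (h2low : ∀ d ∈ T, b2 ≤ N2 d) (h2g : b2 + 1 ≤ N2 g2)
    (h3low : ∀ d ∈ T, b3 ≤ N3 d) (h3g : b3 + 1 ≤ N3 g3)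
    (hmono2 : a1 + 1 ≤ b2) (hmono3 : a1 + 1 ≤ b3) :
    (m - 1) * ((a1+1) * (b2 * b3)) + a1 * ((b2+1) * (b3+1))
      ≤ ∑ d ∈ T, N1 d * (N2 d * N3 d) := by
  obtain ⟨t, rfl⟩ : ∃ t, m = t + 3 := ⟨m - 3, by omega⟩
  obtain ⟨D0, hD0T, h1good'⟩ : ∃ D0, D0 ∈ T ∧ ∀ d ∈ T, d ≠ D0 → a1 + 1 ≤ N1 d := by
    by_cases h : d0 ∈ T
    · exact ⟨d0, h, fun d hd hne => h1good d hd hne⟩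
    · exact ⟨g2, hg2T, fun d hd _ => h1good d hd (fun hh => h (hh ▸ hd))⟩
  clear h1good
  set y : ℕ → ℕ := fun d =>
    (if d = D0 then a1 else a1+1) *
      ((if d = g2 then b2+1 else b2) * (if d = g3 then b3+1 else b3)) with hy
  have hpt : ∀ d ∈ T, y d ≤ N1 d * (N2 d * N3 d) := by
    intro d hd
    apply Nat.mul_le_mul
    · split_ifs with h
      · exact h1low d hd
      · exact h1good' d hd h
    apply Nat.mul_le_mul
    · split_ifs with h
      · exact h ▸ h2g
      · exact h2low d hd
    · split_ifs with h
      · exact h ▸ h3g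
      · exact h3low d hd
  refine le_trans ?_ (Finset.sum_le_sum hpt)
  have hTc : T.card = t + 3 := hT
  have hsub1 : t + 3 - 1 = t + 2 := by omega
  have hsub2 : t + 3 - 2 = t + 1 := by omega
  have hsub3 : t + 3 - 3 = t := by omega
  by_cases e23 : g2 = g3
  · by_cases e0 : D0 = g2
    · have q1 : D0 = g3 := e0.trans e23
      rw [sum_extract1 ((a1+1) * (b2*b3)) hD0T (fun d _ h => by simp [hy, h, ← e0, ← q1]),
        show y D0 = a1 * ((b2+1)*(b3+1)) from by simp [hy, ← e0, ← q1], hTc, hsub1]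
      linarith [hmono2, hmono3]
    · have q1 : ¬ D0 = g3 := fun h => e0 (h.trans e23.symm)
      rw [sum_extract2 ((a1+1) * (b2*b3)) hD0T hg2T e0 (fun d _ h h' => by
          simp [hy, h, h', ← e23]),
        show y D0 = a1 * (b2*b3) from by simp [hy, e0, q1],
        show y g2 = (a1+1) * ((b2+1)*(b3+1)) from by simp [hy, Ne.symm e0, ← e23],
        hTc, hsub2, hsub1]
      linarith [hmono2, hmono3]
  · by_cases e02 : D0 = g2
    · have q1 : ¬ D0 = g3 := fun h => e23 (e02.symm.trans h)
      rw [sum_extract2 ((a1+1) * (b2*b3)) hD0T hg3T q1 (fun d _ h h' => by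
          simp [hy, h, h', ← e02]),
        show y D0 = a1 * ((b2+1)*b3) from by simp [hy, ← e02, q1],
        show y g3 = (a1+1) * (b2*(b3+1)) from by simp [hy, Ne.symm q1, ← e02],
        hTc, hsub2, hsub1]
      linarith [hmono2, hmono3]
    · by_cases e03 : D0 = g3
      · rw [sum_extract2 ((a1+1) * (b2*b3)) hD0T hg2T e02 (fun d _ h h' => by
            simp [hy, h, h', ← e03]),
          show y D0 = a1 * (b2*(b3+1)) from by simp [hy, e02, ← e03],
          show y g2 = (a1+1) * ((b2+1)*b3) from by simp [hy, Ne.symm e02, ← e03],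
          hTc, hsub2, hsub1]
        linarith [hmono2, hmono3]
      · have e23' : ¬ g3 = g2 := fun h => e23 h.symm
        rw [sum_extract3 ((a1+1) * (b2*b3)) hD0T hg2T hg3T e02 e03 e23
            (fun d _ h h' h'' => by simp [hy, h, h', h'']),
          show y D0 = a1 * (b2*b3) from by simp [hy, e02, e03],
          show y g2 = (a1+1) * ((b2+1)*b3) from by simp [hy, Ne.symm e02, e23],
          show y g3 = (a1+1) * (b2*(b3+1)) from by simp [hy, Ne.symm e03, e23'],
          hTc, hsub3, hsub1]
        linarith [hmono2, hmono3]

lemma rowE {m : ℕ} (hm : 3 ≤ m) {T : Finset ℕ} (hT : T.card = m)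
    (N1 N2 N3 : ℕ → ℕ) (b1 a2 a3 : ℕ) (g1 d2 d3 : ℕ)
    (hg1T : g1 ∈ T)
    (h1low : ∀ d ∈ T, b1 ≤ N1 d) (h1g : b1 + 1 ≤ N1 g1)
    (h2low : ∀ d ∈ T, a2 ≤ N2 d) (h2good : ∀ d ∈ T, d ≠ d2 → a2 + 1 ≤ N2 d)
    (h3low : ∀ d ∈ T, a3 ≤ N3 d) (h3good : ∀ d ∈ T, d ≠ d3 → a3 + 1 ≤ N3 d)
    (hmono2 : b1 ≤ a2) (hmono3 : b1 ≤ a3) :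
    (m - 1) * (b1 * ((a2+1) * (a3+1))) + (b1+1) * (a2 * a3)
      ≤ ∑ d ∈ T, N1 d * (N2 d * N3 d) := by
  obtain ⟨t, rfl⟩ : ∃ t, m = t + 3 := ⟨m - 3, by omega⟩
  obtain ⟨D2, hD2T, h2good'⟩ : ∃ D2, D2 ∈ T ∧ ∀ d ∈ T, d ≠ D2 → a2 + 1 ≤ N2 d := by
    by_cases h : d2 ∈ T
    · exact ⟨d2, h, fun d hd hne => h2good d hd hne⟩
    · exact ⟨g1, hg1T, fun d hd _ => h2good d hd (fun hh => h (hh ▸ hd))⟩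
  obtain ⟨D3, hD3T, h3good'⟩ : ∃ D3, D3 ∈ T ∧ ∀ d ∈ T, d ≠ D3 → a3 + 1 ≤ N3 d := by
    by_cases h : d3 ∈ T
    · exact ⟨d3, h, fun d hd hne => h3good d hd hne⟩
    · exact ⟨g1, hg1T, fun d hd _ => h3good d hd (fun hh => h (hh ▸ hd))⟩
  clear h2good h3good
  set y : ℕ → ℕ := fun d =>
    (if d = g1 then b1+1 else b1) *
      ((if d = D2 then a2 else a2+1) * (if d = D3 then a3 else a3+1)) with hy
  have hpt : ∀ d ∈ T, y d ≤ N1 d * (N2 d * N3 d) := by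
    intro d hd
    apply Nat.mul_le_mul
    · split_ifs with h
      · exact h ▸ h1g
      · exact h1low d hd
    apply Nat.mul_le_mul
    · split_ifs with h
      · exact h2low d hd
      · exact h2good' d hd h
    · split_ifs with h
      · exact h3low d hd
      · exact h3good' d hd h
  refine le_trans ?_ (Finset.sum_le_sum hpt)
  have hTc : T.card = t + 3 := hT
  have hsub1 : t + 3 - 1 = t + 2 := by omega
  have hsub2 : t + 3 - 2 = t + 1 := by omega
  have hsub3 : t + 3 - 3 = t := by omega
  by_cases e23 : D2 = D3
  · by_cases e0 : g1 = D2
    · have q1 : g1 = D3 := e0.trans e23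
      rw [sum_extract1 (b1 * ((a2+1)*(a3+1))) hg1T (fun d _ h => by simp [hy, h, ← e0, ← q1]),
        show y g1 = (b1+1) * (a2*a3) from by simp [hy, ← e0, ← q1], hTc, hsub1]
      linarith [hmono2, hmono3]
    · have q1 : ¬ g1 = D3 := fun h => e0 (h.trans e23.symm)
      rw [sum_extract2 (b1 * ((a2+1)*(a3+1))) hg1T hD2T e0 (fun d _ h h' => by
          simp [hy, h, h', ← e23]),
        show y g1 = (b1+1) * ((a2+1)*(a3+1)) from by simp [hy, e0, q1],
        show y D2 = b1 * (a2*a3) from by simp [hy, Ne.symm e0, ← e23],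
        hTc, hsub2, hsub1]
      linarith [hmono2, hmono3]
  · by_cases e02 : g1 = D2
    · have q1 : ¬ g1 = D3 := fun h => e23 (e02.symm.trans h)
      rw [sum_extract2 (b1 * ((a2+1)*(a3+1))) hg1T hD3T q1 (fun d _ h h' => by
          simp [hy, h, h', ← e02]),
        show y g1 = (b1+1) * (a2*(a3+1)) from by simp [hy, ← e02, q1],
        show y D3 = b1 * ((a2+1)*a3) from by simp [hy, Ne.symm q1, ← e02],
        hTc, hsub2, hsub1]
      linarith [hmono2, hmono3]
    · by_cases e03 : g1 = D3
      · rw [sum_extract2 (b1 * ((a2+1)*(a3+1))) hg1T hD2T e02 (fun d _ h h' => by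
            simp [hy, h, h', ← e03]),
          show y g1 = (b1+1) * ((a2+1)*a3) from by simp [hy, e02, ← e03],
          show y D2 = b1 * (a2*(a3+1)) from by simp [hy, Ne.symm e02, ← e03],
          hTc, hsub2, hsub1]
        linarith [hmono2, hmono3]
      · have e23' : ¬ D3 = D2 := fun h => e23 h.symm
        rw [sum_extract3 (b1 * ((a2+1)*(a3+1))) hg1T hD2T hD3T e02 e03 e23
            (fun d _ h h' h'' => by simp [hy, h, h', h'']),
          show y g1 = (b1+1) * ((a2+1)*(a3+1)) from by simp [hy, e02, e03],
          show y D2 = b1 * (a2*(a3+1)) from by simp [hy, Ne.symm e02, e23],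
          show y D3 = b1 * ((a2+1)*a3) from by simp [hy, Ne.symm e03, e23'],
          hTc, hsub3, hsub1]
        linarith [hmono2, hmono3]


lemma nat_card_sigma {ι : Type*} [Fintype ι] (β : ι → Type*) [∀ i, Finite (β i)] :
    Nat.card (Σ i, β i) = ∑ i, Nat.card (β i) := by
  letI : ∀ i, Fintype (β i) := fun i => Fintype.ofFinite (β i)
  rw [Nat.card_eq_fintype_card, Fintype.card_sigma]
  exact Finset.sum_congr rfl fun i _ => (Nat.card_eq_fintype_card).symm

lemma nat_card_fiber {α β : Type*} [Fintype α] (Q : α → β → Prop)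
    [∀ a, Finite {b // Q a b}] :
    Nat.card {p : α × β // Q p.1 p.2} = ∑ a : α, Nat.card {b // Q a b} := by
  have e : {p : α × β // Q p.1 p.2} ≃ Σ a : α, {b : β // Q a b} :=
    { toFun := fun p => ⟨p.1.1, ⟨p.1.2, p.2⟩⟩
      invFun := fun x => ⟨(x.1, x.2.1), x.2.2⟩
      left_inv := fun p => rfl
      right_inv := fun x => rfl }
  rw [Nat.card_congr e, nat_card_sigma]

/-- The conditions on the coloring of the internal vertices of one path. -/
def PathCond (k : ℕ) (Ls : Fin k → Finset ℕ) (c d : ℕ) (g : Fin k → ℕ) : Prop :=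
  (∀ j, g j ∈ Ls j) ∧ (∀ j : Fin k, (j : ℕ) = 0 → g j ≠ c) ∧
  (∀ j : Fin k, (j : ℕ) + 1 = k → g j ≠ d) ∧
  (∀ j j' : Fin k, (j : ℕ) + 1 = (j' : ℕ) → g j ≠ g j') ∧ (k = 0 → c ≠ d)

lemma pathCond_finite (k : ℕ) (Ls : Fin k → Finset ℕ) (c d : ℕ) :
    Finite {g : Fin k → ℕ // PathCond k Ls c d g} := by
  apply Finite.of_injective (fun g => (fun j => (⟨g.1 j, g.2.1 j⟩ : {x // x ∈ Ls j})))
  intro g g' h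
  apply Subtype.ext
  funext j
  have := congrFun h j
  exact Subtype.ext_iff.mp this

lemma card_pathCond : ∀ (k : ℕ) (Ls : Fin k → Finset ℕ) (c d : ℕ),
    Nat.card {g : Fin k → ℕ // PathCond k Ls c d g} = qCount k Ls c d := by
  intro k
  induction k with
  | zero =>
    intro Ls c d
    by_cases h : c = d
    · have : IsEmpty {g : Fin 0 → ℕ // PathCond 0 Ls c d g} :=
        ⟨fun g => g.2.2.2.2.2 rfl h⟩
      rw [Nat.card_of_isEmpty, qCount, if_pos h]
    · have e : {g : Fin 0 → ℕ // PathCond 0 Ls c d g} ≃ PUnit.{1} :=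
      { toFun := fun _ => PUnit.unit
        invFun := fun _ => ⟨fun j => j.elim0,
          ⟨fun j => j.elim0, fun j => j.elim0, fun j => j.elim0,
            fun j => j.elim0, fun _ => h⟩⟩
        left_inv := fun g => Subtype.ext (funext fun j => j.elim0)
        right_inv := fun _ => rfl }
      rw [Nat.card_congr e, Nat.card_eq_fintype_card]
      simp [qCount, h]
  | succ k ih =>
    intro Ls c d
    have hfin : ∀ a : ((Ls (Fin.last k)).erase d),
        Finite {g' : Fin k → ℕ // PathCond k (fun j => Ls j.castSucc) c (↑a) g'} :=
      fun a => pathCond_finite _ _ _ _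
    have e : {g : Fin (k+1) → ℕ // PathCond (k+1) Ls c d g} ≃
        {p : ((Ls (Fin.last k)).erase d) × (Fin k → ℕ) //
          PathCond k (fun j => Ls j.castSucc) c (↑p.1) p.2} :=
    { toFun := fun g =>
        ⟨(⟨g.1 (Fin.last k), Finset.mem_erase.mpr
            ⟨g.2.2.2.1 (Fin.last k) (by simp), g.2.1 _⟩⟩, fun j => g.1 j.castSucc), by
          obtain ⟨hmem, h0, hlast, hchain, _⟩ := g.2
          refine ⟨fun j => hmem _, fun j hj => h0 _ (by simpa using hj),
            fun j hj => hchain j.castSucc (Fin.last k) (by simpa using hj),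
            fun j j' hjj' => hchain j.castSucc j'.castSucc (by simpa using hjj'),
            fun hk => ?_⟩
          subst hk
          exact fun hc => (h0 (Fin.last 0) rfl) hc.symm⟩
      invFun := fun p => ⟨Fin.snoc p.1.2 ↑p.1.1, by
        obtain ⟨hmem', h0', hlast', hchain', hk'⟩ := p.2
        obtain ⟨had, haL⟩ := Finset.mem_erase.mp p.1.1.2
        refine ⟨fun j => ?_, fun j hj => ?_, fun j hj => ?_,
          fun j j' hjj' => ?_, fun h => absurd h (Nat.succ_ne_zero k)⟩
        · refine Fin.lastCases ?_ (fun i => ?_) j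
          · rw [Fin.snoc_last]; exact haL
          · rw [Fin.snoc_castSucc]; exact hmem' i
        · revert hj
          refine Fin.lastCases ?_ (fun i => ?_) j <;> intro hj
          · have hk0 : k = 0 := by simpa using hj
            rw [Fin.snoc_last]
            exact fun h => (hk' hk0) h.symm
          · rw [Fin.snoc_castSucc]
            exact h0' i (by simpa using hj)
        · revert hj
          refine Fin.lastCases ?_ (fun i => ?_) j <;> intro hj
          · rw [Fin.snoc_last]; exact had
          · exfalso
            have := i.2
            simp at hj
            omega
        · revert hjj'
          refine Fin.lastCases ?_ (fun i' => ?_) j' <;> intro hjj'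
          · revert hjj'
            refine Fin.lastCases ?_ (fun i => ?_) j <;> intro hjj'
            · exfalso; simp at hjj'
            · rw [Fin.snoc_last, Fin.snoc_castSucc]
              exact hlast' i (by simpa using hjj')
          · revert hjj'
            refine Fin.lastCases ?_ (fun i => ?_) j <;> intro hjj'
            · exfalso
              have := i'.2
              simp at hjj'
              omega
            · rw [Fin.snoc_castSucc, Fin.snoc_castSucc]
              exact hchain' i i' (by simpa using hjj')⟩
      left_inv := fun g => Subtype.ext (Fin.snoc_init_self g.1)
      right_inv := fun p => Subtype.ext (by
        refine Prod.ext (Subtype.ext ?_) (funext fun j => ?_)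
        · simp
        · simp) }
    rw [Nat.card_congr e, nat_card_fiber
      (fun (a : ((Ls (Fin.last k)).erase d)) (g' : Fin k → ℕ) =>
        PathCond k (fun j => Ls j.castSucc) c (↑a) g')]
    have : ∀ a : ((Ls (Fin.last k)).erase d),
        Nat.card {g' : Fin k → ℕ // PathCond k (fun j => Ls j.castSucc) c (↑a) g'}
          = qCount k (fun j => Ls j.castSucc) c (↑a) := fun a => ih _ c _
    rw [Finset.sum_congr rfl (fun a _ => this a)]
    rw [Finset.sum_coe_sort]
    rfl


lemma theta_proper_iff (l1 l2 l3 : ℕ) (h1 : 1 ≤ l1) (h2 : 1 ≤ l2) (h3 : 1 ≤ l3)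
    (L : ThetaVert l1 l2 l3 → Finset ℕ) (f : ThetaVert l1 l2 l3 → ℕ) :
    ProperLColoring (thetaGraph l1 l2 l3) L f ↔
      (f (Sum.inl false) ∈ L (Sum.inl false) ∧ f (Sum.inl true) ∈ L (Sum.inl true) ∧
        ∀ i : Fin 3, PathCond (![l1,l2,l3] i - 1) (fun j => L (Sum.inr ⟨i, j⟩))
          (f (Sum.inl false)) (f (Sum.inl true)) (fun j => f (Sum.inr ⟨i, j⟩))) := by
  have hls : ∀ i : Fin 3, 1 ≤ ![l1,l2,l3] i := by
    intro i; fin_cases i <;> simpa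
  constructor
  · rintro ⟨hmem, hadj⟩
    have adj : ∀ u w : ThetaVert l1 l2 l3, u ≠ w → thetaRel l1 l2 l3 u w → f u ≠ f w :=
      fun u w hne hrel =>
        hadj ((SimpleGraph.fromRel_adj _ _ _).mpr ⟨hne, Or.inl hrel⟩)
    refine ⟨hmem _, hmem _, fun i => ⟨fun j => hmem _, ?_, ?_, ?_, ?_⟩⟩
    · intro j hj hEq
      exact (adj (Sum.inl false) (Sum.inr ⟨i, j⟩) (by simp) hj) hEq.symm
    · intro j hj
      have hj2 : (j : ℕ) + 2 = ![l1,l2,l3] i := by have := hls i; omega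
      exact adj (Sum.inr ⟨i, j⟩) (Sum.inl true) (by simp) hj2
    · intro j j' hjj'
      refine adj (Sum.inr ⟨i, j⟩) (Sum.inr ⟨i, j'⟩) ?_ ⟨rfl, hjj'⟩
      intro hEq
      have h2 := Sum.inr.inj hEq
      have h3 : j = j' := (Sigma.mk.inj_iff.mp h2).2.eq
      rw [h3] at hjj'
      omega
    · intro hni
      have hone : l1 = 1 ∨ l2 = 1 ∨ l3 = 1 := by
        have h := hls i
        clear h
        fin_cases i
        · refine Or.inl ?_
          simp at hni
          omega
        · refine Or.inr (Or.inl ?_)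
          simp at hni
          omega
        · refine Or.inr (Or.inr ?_)
          simp at hni
          omega
      exact adj (Sum.inl false) (Sum.inl true) (by simp) hone
  · rintro ⟨hc, hd, hP⟩
    have aux : ∀ u w : ThetaVert l1 l2 l3, u ≠ w → thetaRel l1 l2 l3 u w → f u ≠ f w := by
      intro u w hne hrel
      rcases u with (_|_) | ⟨i, j⟩ <;> rcases w with (_|_) | ⟨i', j'⟩
      all_goals try exact hrel.elim
      · -- inl false, inl true
        rcases hrel with h | h | h
        · exact (hP 0).2.2.2.2 (by simp [h])
        · exact (hP 1).2.2.2.2 (by simp [h])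
        · exact (hP 2).2.2.2.2 (by simp [h])
      · -- inl false, inr
        intro hEq
        exact (hP i').2.1 j' hrel hEq.symm
      · -- inr, inl true
        refine (hP i).2.2.1 j ?_
        have hrel' : (j : ℕ) + 2 = ![l1,l2,l3] i := hrel
        have := hls i
        omega
      · -- inr, inr
        obtain ⟨rfl, hjj'⟩ := hrel
        exact (hP i).2.2.2.1 j j' hjj'
    refine ⟨?_, ?_⟩
    · intro v
      rcases v with (_|_) | ⟨i, j⟩
      · exact hc
      · exact hd
      · exact (hP i).1 j
    · intro u w hadj
      rw [thetaGraph, SimpleGraph.fromRel_adj] at hadj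
      obtain ⟨hne, h | h⟩ := hadj
      · exact aux u w hne h
      · exact (aux w u (Ne.symm hne) h).symm

lemma theta_PList (l1 l2 l3 : ℕ) (h1 : 1 ≤ l1) (h2 : 1 ≤ l2) (h3 : 1 ≤ l3)
    (L : ThetaVert l1 l2 l3 → Finset ℕ) :
    PList (thetaGraph l1 l2 l3) L =
      ∑ c ∈ L (Sum.inl false), ∑ d ∈ L (Sum.inl true),
        ∏ i : Fin 3, qCount (![l1,l2,l3] i - 1) (fun j => L (Sum.inr ⟨i, j⟩)) c d := by
  classical
  rw [PList]
  rw [Nat.card_congr (Equiv.subtypeEquivRight (fun f => theta_proper_iff l1 l2 l3 h1 h2 h3 L f))]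
  set S := L (Sum.inl false) with hS
  set T := L (Sum.inl true) with hT
  have e2 : {f : ThetaVert l1 l2 l3 → ℕ //
        f (Sum.inl false) ∈ S ∧ f (Sum.inl true) ∈ T ∧
        ∀ i : Fin 3, PathCond (![l1,l2,l3] i - 1) (fun j => L (Sum.inr ⟨i, j⟩))
          (f (Sum.inl false)) (f (Sum.inl true)) (fun j => f (Sum.inr ⟨i, j⟩))} ≃
      {p : (S × T) × ((i : Fin 3) → Fin (![l1,l2,l3] i - 1) → ℕ) //
        ∀ i : Fin 3, PathCond (![l1,l2,l3] i - 1) (fun j => L (Sum.inr ⟨i, j⟩))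
          (↑p.1.1) (↑p.1.2) (p.2 i)} :=
  { toFun := fun f => ⟨((⟨f.1 (Sum.inl false), f.2.1⟩, ⟨f.1 (Sum.inl true), f.2.2.1⟩),
      fun i j => f.1 (Sum.inr ⟨i, j⟩)), f.2.2.2⟩
    invFun := fun p => ⟨fun v => match v with
      | Sum.inl false => ↑p.1.1.1
      | Sum.inl true => ↑p.1.1.2
      | Sum.inr ⟨i, j⟩ => p.1.2 i j,
      ⟨p.1.1.1.2, p.1.1.2.2, p.2⟩⟩
    left_inv := fun f => Subtype.ext (funext fun v => by
      rcases v with (_|_) | ⟨i, j⟩ <;> rfl)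
    right_inv := fun p => rfl }
  rw [Nat.card_congr e2]
  haveI : ∀ cd : (↥S × ↥T), Finite {g : (i : Fin 3) → Fin (![l1,l2,l3] i - 1) → ℕ //
      ∀ i : Fin 3, PathCond (![l1,l2,l3] i - 1) (fun j => L (Sum.inr ⟨i, j⟩))
        (↑cd.1) (↑cd.2) (g i)} := by
    intro cd
    letI : ∀ i : Fin 3, Finite {gi : Fin (![l1,l2,l3] i - 1) → ℕ //
        PathCond (![l1,l2,l3] i - 1) (fun j => L (Sum.inr ⟨i, j⟩)) (↑cd.1) (↑cd.2) gi} :=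
      fun i => pathCond_finite _ _ _ _
    exact Finite.of_equiv _ (Equiv.subtypePiEquivPi
      (p := fun i gi => PathCond (![l1,l2,l3] i - 1) (fun j => L (Sum.inr ⟨i, j⟩))
        (↑cd.1) (↑cd.2) gi)).symm
  have step : Nat.card {p : (S × T) × ((i : Fin 3) → Fin (![l1,l2,l3] i - 1) → ℕ) //
        ∀ i : Fin 3, PathCond (![l1,l2,l3] i - 1) (fun j => L (Sum.inr ⟨i, j⟩))
          (↑p.1.1) (↑p.1.2) (p.2 i)}
      = ∑ cd : (↥S × ↥T), Nat.card {g : (i : Fin 3) → Fin (![l1,l2,l3] i - 1) → ℕ //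
        ∀ i : Fin 3, PathCond (![l1,l2,l3] i - 1) (fun j => L (Sum.inr ⟨i, j⟩))
          (↑cd.1) (↑cd.2) (g i)} :=
    nat_card_fiber (fun (cd : ↥S × ↥T) (g : (i : Fin 3) → Fin (![l1,l2,l3] i - 1) → ℕ) =>
      ∀ i : Fin 3, PathCond (![l1,l2,l3] i - 1) (fun j => L (Sum.inr ⟨i, j⟩))
        (↑cd.1) (↑cd.2) (g i))
  rw [step]
  have hcd : ∀ cd : (↥S × ↥T),
      Nat.card {g : (i : Fin 3) → Fin (![l1,l2,l3] i - 1) → ℕ //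
        ∀ i : Fin 3, PathCond (![l1,l2,l3] i - 1) (fun j => L (Sum.inr ⟨i, j⟩))
          (↑cd.1) (↑cd.2) (g i)}
        = ∏ i : Fin 3, qCount (![l1,l2,l3] i - 1) (fun j => L (Sum.inr ⟨i, j⟩))
            (↑cd.1) (↑cd.2) := by
    intro cd
    letI : ∀ i : Fin 3, Finite {gi : Fin (![l1,l2,l3] i - 1) → ℕ //
        PathCond (![l1,l2,l3] i - 1) (fun j => L (Sum.inr ⟨i, j⟩)) (↑cd.1) (↑cd.2) gi} :=
      fun i => pathCond_finite _ _ _ _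
    rw [Nat.card_congr (Equiv.subtypePiEquivPi
      (p := fun i gi => PathCond (![l1,l2,l3] i - 1) (fun j => L (Sum.inr ⟨i, j⟩))
        (↑cd.1) (↑cd.2) gi)), Nat.card_pi]
    exact Finset.prod_congr rfl fun i _ => card_pathCond _ _ _ _
  rw [Fintype.sum_congr _ _ hcd, Fintype.sum_prod_type]
  rw [← Finset.sum_coe_sort S]
  refine Finset.sum_congr rfl ?_
  intro c _
  rw [← Finset.sum_coe_sort T]



lemma sdiff_nonempty_of_card {T D : Finset ℕ} {m : ℕ} (hT : T.card = m)
    (hD : D.card ≤ m - 1) (hm : 1 ≤ m) : (T \ D).Nonempty := by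
  rw [← Finset.card_pos]
  have := Finset.le_card_sdiff D T
  omega

lemma caseE_mono (m : ℕ) (hm3 : 3 ≤ m) {k k' : ℕ} (hk : k % 2 = 1) (hk' : k' % 2 = 0)
    (hkk : k + 1 ≤ k') : Bk m k ≤ Ak m k' := by
  have hx := Bk_succ_of_odd m (by omega) hk
  have hy := Bk_mono m hm3 hkk
  have hz := (AB_parity m (by omega) k').1 hk'
  omega

lemma theta_PChrom (l1 l2 l3 : ℕ) (h1 : 1 ≤ l1) (h2 : 1 ≤ l2) (h3 : 1 ≤ l3)
    (m : ℕ) (hm : 1 ≤ m) :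
    PChrom (thetaGraph l1 l2 l3) m
      = m * (∏ i : Fin 3, Ak m (![l1,l2,l3] i - 1))
        + m * ((m - 1) * ∏ i : Fin 3, Bk m (![l1,l2,l3] i - 1)) := by
  have hIcc : (Finset.Icc 1 m).card = m := by rw [Nat.card_Icc]; omega
  rw [PChrom, theta_PList l1 l2 l3 h1 h2 h3]
  have hcell : ∀ c ∈ Finset.Icc 1 m, ∀ d ∈ Finset.Icc 1 m,
      (∏ i : Fin 3, qCount (![l1,l2,l3] i - 1)
        (fun j => (fun _ : ThetaVert l1 l2 l3 => Finset.Icc 1 m) (Sum.inr ⟨i, j⟩)) c d)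
      = if c = d then (∏ i : Fin 3, Ak m (![l1,l2,l3] i - 1))
        else (∏ i : Fin 3, Bk m (![l1,l2,l3] i - 1)) := by
    intro c hc d hd
    have hfac : ∀ i : Fin 3, qCount (![l1,l2,l3] i - 1)
        (fun j => (fun _ : ThetaVert l1 l2 l3 => Finset.Icc 1 m) (Sum.inr ⟨i, j⟩)) c d
        = if c = d then Ak m (![l1,l2,l3] i - 1) else Bk m (![l1,l2,l3] i - 1) :=
      fun i => qCount_uniform m _ c d hc hd
    rw [Finset.prod_congr rfl fun i _ => hfac i]
    by_cases h : c = d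
    · rw [if_pos h]
      exact Finset.prod_congr rfl fun i _ => if_pos h
    · rw [if_neg h]
      exact Finset.prod_congr rfl fun i _ => if_neg h
  rw [Finset.sum_congr rfl fun c hc => Finset.sum_congr rfl (hcell c hc),
    sum_diag_split, hIcc]


end ThetaAux

theorem theta_enum_chromatic_choosable_of_parity (l1 l2 l3 : ℕ)
    (h1 : 1 ≤ l1) (h12 : l1 ≤ l2) (h23 : l2 ≤ l3)
    (hp2 : l1 % 2 ≠ l2 % 2) (hp3 : l1 % 2 ≠ l3 % 2) :
    EnumChromChoosable (thetaGraph l1 l2 l3) := by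
  have h2 : 1 ≤ l2 := h1.trans h12
  have h3 : 1 ≤ l3 := h2.trans h23
  have hl12 : l1 < l2 := by omega
  have hl13 : l1 < l3 := by omega
  have par1 : l1 % 2 = 1 → (l1 - 1) % 2 = 0 ∧ (l2 - 1) % 2 = 1 ∧ (l3 - 1) % 2 = 1 := by
    intro hp; omega
  have par2 : l1 % 2 = 0 → (l1 - 1) % 2 = 1 ∧ (l2 - 1) % 2 = 0 ∧ (l3 - 1) % 2 = 0 := by
    intro hp; omega
  have hle12 : l1 - 1 ≤ l2 - 1 := by omega
  have hle13 : l1 - 1 ≤ l3 - 1 := by omega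
  have hlt12 : (l1 - 1) + 1 ≤ l2 - 1 := by omega
  have hlt13 : (l1 - 1) + 1 ≤ l3 - 1 := by omega
  have e0 : (![l1,l2,l3] : Fin 3 → ℕ) 0 = l1 := rfl
  have e1 : (![l1,l2,l3] : Fin 3 → ℕ) 1 = l2 := rfl
  have e2 : (![l1,l2,l3] : Fin 3 → ℕ) 2 = l3 := rfl
  intro m hm
  have hIcc : (Finset.Icc 1 m).card = m := by rw [Nat.card_Icc]; omega
  set PA := ∏ i : Fin 3, ThetaAux.Ak m (![l1,l2,l3] i - 1) with hPA
  set PB := ∏ i : Fin 3, ThetaAux.Bk m (![l1,l2,l3] i - 1) with hPB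
  -- the chromatic polynomial value
  have hPC : PChrom (thetaGraph l1 l2 l3) m = m * PA + m * ((m - 1) * PB) :=
    ThetaAux.theta_PChrom l1 l2 l3 h1 h2 h3 m hm
  have hmemset : PChrom (thetaGraph l1 l2 l3) m ∈
      {n | ∃ L : ThetaVert l1 l2 l3 → Finset ℕ,
        (∀ v, (L v).card = m) ∧ n = PList (thetaGraph l1 l2 l3) L} :=
    ⟨fun _ => Finset.Icc 1 m, fun _ => hIcc, rfl⟩
  -- the key lower bound
  have hlb : ∀ L : ThetaVert l1 l2 l3 → Finset ℕ, (∀ v, (L v).card = m) →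
      PChrom (thetaGraph l1 l2 l3) m ≤ PList (thetaGraph l1 l2 l3) L := by
    intro L hL
    rw [hPC, ThetaAux.theta_PList l1 l2 l3 h1 h2 h3 L]
    rcases Nat.lt_or_ge m 3 with hm3 | hm3
    · -- m ≤ 2 : the chromatic polynomial vanishes
      have hzero : m * PA + m * ((m - 1) * PB) = 0 := by
        interval_cases m
        · have : PA = 0 := by
            rw [hPA]
            exact Finset.prod_eq_zero (Finset.mem_univ (0 : Fin 3)) (ThetaAux.m1_vanish _)
          simp [this]
        · by_cases hpar : l1 % 2 = 1
          · have hA : ThetaAux.Ak 2 (![l1,l2,l3] 0 - 1) = 0 :=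
              (ThetaAux.m2_vanish _).1 (by rw [e0]; exact (par1 hpar).1)
            have hB : ThetaAux.Bk 2 (![l1,l2,l3] 1 - 1) = 0 :=
              (ThetaAux.m2_vanish _).2 (by rw [e1]; exact (par1 hpar).2.1)
            have hA' : PA = 0 := by
              rw [hPA]; exact Finset.prod_eq_zero (Finset.mem_univ (0 : Fin 3)) hA
            have hB' : PB = 0 := by
              rw [hPB]; exact Finset.prod_eq_zero (Finset.mem_univ (1 : Fin 3)) hB
            simp [hA', hB']
          · have hA : ThetaAux.Ak 2 (![l1,l2,l3] 1 - 1) = 0 :=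
              (ThetaAux.m2_vanish _).1 (by rw [e1]; exact (par2 (by omega)).2.1)
            have hB : ThetaAux.Bk 2 (![l1,l2,l3] 0 - 1) = 0 :=
              (ThetaAux.m2_vanish _).2 (by rw [e0]; exact (par2 (by omega)).1)
            have hA' : PA = 0 := by
              rw [hPA]; exact Finset.prod_eq_zero (Finset.mem_univ (1 : Fin 3)) hA
            have hB' : PB = 0 := by
              rw [hPB]; exact Finset.prod_eq_zero (Finset.mem_univ (0 : Fin 3)) hB
            simp [hA', hB']
      rw [hzero]
      exact Nat.zero_le _
    · -- m ≥ 3 : the main counting argument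
      set S := L (Sum.inl false) with hS
      set T := L (Sum.inl true) with hT
      have hScard : S.card = m := hL _
      have hTcard : T.card = m := hL _
      set q : Fin 3 → ℕ → ℕ → ℕ := fun i c d =>
        ThetaAux.qCount (![l1,l2,l3] i - 1) (fun j => L (Sum.inr ⟨i, j⟩)) c d with hq
      set A1 := ThetaAux.Ak m (![l1,l2,l3] 0 - 1) with hA1
      set A2 := ThetaAux.Ak m (![l1,l2,l3] 1 - 1) with hA2
      set A3 := ThetaAux.Ak m (![l1,l2,l3] 2 - 1) with hA3
      set B1 := ThetaAux.Bk m (![l1,l2,l3] 0 - 1) with hB1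
      set B2 := ThetaAux.Bk m (![l1,l2,l3] 1 - 1) with hB2
      set B3 := ThetaAux.Bk m (![l1,l2,l3] 2 - 1) with hB3
      have hm2 : 2 ≤ m := by omega
      have rowbound : ∀ c ∈ S,
          (m - 1) * (B1 * (B2 * B3)) + A1 * (A2 * A3)
            ≤ ∑ d ∈ T, q 0 c d * (q 1 c d * q 2 c d) := by
        intro c _
        have I0 := ThetaAux.qCount_inv m hm3 (![l1,l2,l3] 0 - 1)
          (fun j => L (Sum.inr ⟨0, j⟩)) (fun j => hL _) c
        have I1 := ThetaAux.qCount_inv m hm3 (![l1,l2,l3] 1 - 1)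
          (fun j => L (Sum.inr ⟨1, j⟩)) (fun j => hL _) c
        have I2 := ThetaAux.qCount_inv m hm3 (![l1,l2,l3] 2 - 1)
          (fun j => L (Sum.inr ⟨2, j⟩)) (fun j => hL _) c
        by_cases hpar : l1 % 2 = 1
        · -- l1 odd, l2 l3 even
          have hk0 : (![l1,l2,l3] 0 - 1) % 2 = 0 := by rw [e0]; exact (par1 hpar).1
          have hk1 : (![l1,l2,l3] 1 - 1) % 2 = 1 := by rw [e1]; exact (par1 hpar).2.1
          have hk2 : (![l1,l2,l3] 2 - 1) % 2 = 1 := by rw [e2]; exact (par1 hpar).2.2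
          obtain ⟨hA1low, d0, hd0⟩ := I0.1 hk0
          obtain ⟨hB2low, D2, hD2card, hD2good⟩ := I1.2 hk1
          obtain ⟨hB3low, D3, hD3card, hD3good⟩ := I2.2 hk2
          have hab1 : A1 + 1 = B1 := (ThetaAux.AB_parity m hm2 _).1 hk0
          have hab2 : A2 = B2 + 1 := (ThetaAux.AB_parity m hm2 _).2 hk1
          have hab3 : A3 = B3 + 1 := (ThetaAux.AB_parity m hm2 _).2 hk2
          obtain ⟨g2, hg2⟩ : (T \ D2).Nonempty :=
            ThetaAux.sdiff_nonempty_of_card hTcard hD2card (by omega)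
          obtain ⟨g3, hg3⟩ : (T \ D3).Nonempty :=
            ThetaAux.sdiff_nonempty_of_card hTcard hD3card (by omega)
          rw [Finset.mem_sdiff] at hg2 hg3
          have hmono2 : A1 + 1 ≤ B2 := by
            rw [hab1, hB1, hB2]
            exact ThetaAux.Bk_mono m hm3 (by rw [e0, e1]; exact hle12)
          have hmono3 : A1 + 1 ≤ B3 := by
            rw [hab1, hB1, hB3]
            exact ThetaAux.Bk_mono m hm3 (by rw [e0, e2]; exact hle13)
          have conc := ThetaAux.rowO hm3 hTcard
            (fun d => q 0 c d) (fun d => q 1 c d) (fun d => q 2 c d)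
            A1 B2 B3 d0 g2 g3 hg2.1 hg3.1
            (fun d _ => hA1low d)
            (fun d _ hne => by rw [hab1]; exact hd0 d hne)
            (fun d _ => hB2low d) (hD2good g2 hg2.2)
            (fun d _ => hB3low d) (hD3good g3 hg3.2)
            hmono2 hmono3
          rw [hab1, ← hab2, ← hab3] at conc
          exact conc
        · -- l1 even, l2 l3 odd
          have hpar0 : l1 % 2 = 0 := by omega
          have hk0 : (![l1,l2,l3] 0 - 1) % 2 = 1 := by rw [e0]; exact (par2 hpar0).1
          have hk1 : (![l1,l2,l3] 1 - 1) % 2 = 0 := by rw [e1]; exact (par2 hpar0).2.1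
          have hk2 : (![l1,l2,l3] 2 - 1) % 2 = 0 := by rw [e2]; exact (par2 hpar0).2.2
          obtain ⟨hB1low, D1, hD1card, hD1good⟩ := I0.2 hk0
          obtain ⟨hA2low, d2, hd2⟩ := I1.1 hk1
          obtain ⟨hA3low, d3, hd3⟩ := I2.1 hk2
          have hab1 : A1 = B1 + 1 := (ThetaAux.AB_parity m hm2 _).2 hk0
          have hab2 : A2 + 1 = B2 := (ThetaAux.AB_parity m hm2 _).1 hk1
          have hab3 : A3 + 1 = B3 := (ThetaAux.AB_parity m hm2 _).1 hk2
          obtain ⟨g1, hg1⟩ : (T \ D1).Nonempty :=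
            ThetaAux.sdiff_nonempty_of_card hTcard hD1card (by omega)
          rw [Finset.mem_sdiff] at hg1
          have hmono2 : B1 ≤ A2 := by
            rw [hB1, hA2]
            exact ThetaAux.caseE_mono m hm3 hk0 hk1 (by rw [e0, e1]; exact hlt12)
          have hmono3 : B1 ≤ A3 := by
            rw [hB1, hA3]
            exact ThetaAux.caseE_mono m hm3 hk0 hk2 (by rw [e0, e2]; exact hlt13)
          have conc := ThetaAux.rowE hm3 hTcard
            (fun d => q 0 c d) (fun d => q 1 c d) (fun d => q 2 c d)
            B1 A2 A3 g1 d2 d3 hg1.1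
            (fun d _ => hB1low d) (hD1good g1 hg1.2)
            (fun d _ => hA2low d) (fun d _ hne => by rw [hab2]; exact hd2 d hne)
            (fun d _ => hA3low d) (fun d _ hne => by rw [hab3]; exact hd3 d hne)
            hmono2 hmono3
          rw [← hab1, hab2, hab3] at conc
          exact conc
      calc m * PA + m * ((m - 1) * PB)
          = ∑ _c ∈ S, ((m - 1) * (B1 * (B2 * B3)) + A1 * (A2 * A3)) := by
            rw [Finset.sum_const, hScard, smul_eq_mul, hPA, hPB,
              Fin.prod_univ_three, Fin.prod_univ_three]
            ring
        _ ≤ ∑ c ∈ S, ∑ d ∈ T, q 0 c d * (q 1 c d * q 2 c d) :=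
            Finset.sum_le_sum rowbound
        _ = ∑ c ∈ S, ∑ d ∈ T, ∏ i : Fin 3,
              ThetaAux.qCount (![l1,l2,l3] i - 1) (fun j => L (Sum.inr ⟨i, j⟩)) c d := by
            refine Finset.sum_congr rfl fun c _ => Finset.sum_congr rfl fun d _ => ?_
            rw [Fin.prod_univ_three, hq]
            ring
  apply le_antisymm
  · exact Nat.sInf_le hmemset
  · refine le_csInf ⟨_, hmemset⟩ ?_
    rintro n ⟨L, hLc, rfl⟩
    exact hlb L hLc
end

section
/- Let G be a graph and L an m-assignment for G. Suppose uv ∈ E(G), |L(u) − L(v)| = d ≥ 1, and for every x ∈ L(u) and y ∈ L(v) with x ≠ y there are at least C proper L-colorings of G that color u with x and v with y. Then P(G,L) ≥ P_DP(G,m) + C·d. -/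
open SimpleGraph Finset

/-! Since `|L u| = |L v|`, there is an injection `τ : L u → L v` that fixes `L u ∩ L v`. Matching
`c ∈ L u` with `τ c ∈ L v` on the edge `uv`, and every colour with itself on all other edges, gives
an `m`-fold cover of `G` whose proper colorings are exactly the proper `L`-colorings `f` with
`f v ≠ τ (f u)`. The remaining proper `L`-colorings have `f u = x ∈ L u \ L v` and
`f v = τ x ≠ x`, so for each of the `d` choices of `x` there are at least `C` of them. -/

theorem Finset.exists_mapsTo_injOn_eq_self_of_card_le {α : Type*} [DecidableEq α]
    {s t : Finset α} (h : #s ≤ #t) :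
    ∃ τ : α → α, Set.MapsTo τ s t ∧ Set.InjOn τ s ∧ ∀ c ∈ s, c ∈ t → τ c = c := by
  obtain ⟨φ⟩ : Nonempty (↥(s \ t) ↪ ↥(t \ s)) :=
    Function.Embedding.nonempty_of_card_le (by simpa using card_sdiff_le_card_sdiff_iff.2 h)
  have hφ (c : ↥(s \ t)) : (φ c : α) ∈ t ∧ (φ c : α) ∉ s := mem_sdiff.1 (φ c).2
  refine ⟨fun c => if hc : c ∈ s \ t then φ ⟨c, hc⟩ else c, ?_, ?_, ?_⟩
  · intro c hc
    dsimp only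
    split_ifs with hct
    · exact (hφ _).1
    · by_contra ht
      exact hct (mem_sdiff.2 ⟨hc, ht⟩)
  · intro c₁ h₁ c₂ h₂ heq
    dsimp only at heq
    split_ifs at heq with k₁ k₂ k₂
    · exact congrArg Subtype.val (φ.injective (Subtype.ext heq))
    · exact absurd (heq ▸ h₂) (hφ _).2
    · exact absurd (heq ▸ h₁) (hφ _).2
    · exact heq
  · intro c hs ht
    simp [ht]

section ListCover

variable {V : Type*} [Fintype V]

/-- The vertex is stored as an element of `Fin (Fintype.card V)` so that the type lies in
`Type`, as `PDP` requires. -/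
def ListPair (L : V → Finset ℕ) : Type :=
  {p : Fin (Fintype.card V) × ℕ // p.2 ∈ L ((Fintype.equivFin V).symm p.1)}

namespace ListPair

variable {L : V → Finset ℕ}

noncomputable def vert (w : ListPair L) : V := (Fintype.equivFin V).symm w.1.1

def color (w : ListPair L) : ℕ := w.1.2

theorem color_mem (w : ListPair L) : w.color ∈ L w.vert := w.2

noncomputable def mk (a : V) (c : ℕ) (hc : c ∈ L a) : ListPair L :=
  ⟨(Fintype.equivFin V a, c), by simpa using hc⟩

@[simp]
theorem vert_mk (a : V) (c : ℕ) (hc : c ∈ L a) : (mk a c hc).vert = a := by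
  simp [mk, vert]

@[simp]
theorem color_mk (a : V) (c : ℕ) (hc : c ∈ L a) : (mk a c hc).color = c := rfl

theorem ext {w w' : ListPair L} (hv : w.vert = w'.vert) (hc : w.color = w'.color) : w = w' :=
  Subtype.ext (Prod.ext ((Fintype.equivFin V).symm.injective hv) hc)

noncomputable def fiberEquiv (a : V) : {w : ListPair L // w.vert = a} ≃ {c // c ∈ L a} where
  toFun w := ⟨w.1.color, by simpa [w.2] using w.1.color_mem⟩
  invFun c := ⟨mk a c.1 c.2, vert_mk _ _ _⟩
  left_inv w := Subtype.ext (ext (by simp [w.2]) rfl)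
  right_inv _ := rfl

end ListPair

variable (G : SimpleGraph V) (L : V → Finset ℕ) {R : V → V → ℕ → ℕ → Prop}
  (hsymm : ∀ a b c c', R a b c c' → R b a c' c)
  (hmatch : ∀ a b c c' c'', c' ∈ L b → c'' ∈ L b → R a b c c' → R a b c c'' → c' = c'')

noncomputable def relCover : DPCover G (ListPair L) where
  H :=
    { Adj := fun w w' => G.Adj w.vert w'.vert ∧ R w.vert w'.vert w.color w'.color
      symm := ⟨fun _ _ h => ⟨h.1.symm, hsymm _ _ _ _ h.2⟩⟩
      loopless := ⟨fun _ h => G.irrefl h.1⟩ }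
  L a := {w | w.vert = a}
  partition w := ⟨w.vert, rfl, fun _ h => h.symm⟩
  matching := by
    rintro a b - x y y' - (rfl : y.vert = b) (hy' : y'.vert = y.vert) ⟨-, hxy⟩ ⟨-, hxy'⟩
    have hmem := y'.color_mem
    rw [hy'] at hmem hxy'
    exact ListPair.ext hy'.symm (hmatch _ _ _ _ _ y.color_mem hmem hxy hxy')
  cross _ _ h := ⟨_, _, h.1, rfl, rfl⟩

@[simp]
theorem mem_relCover_L {a : V} {w : ListPair L} :
    w ∈ (relCover G L hsymm hmatch).L a ↔ w.vert = a := Iff.rfl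

@[simp]
theorem relCover_adj {w w' : ListPair L} :
    (relCover G L hsymm hmatch).H.Adj w w' ↔
      G.Adj w.vert w'.vert ∧ R w.vert w'.vert w.color w'.color := Iff.rfl

theorem relCover_card_L (a : V) : Nat.card ((relCover G L hsymm hmatch).L a) = #(L a) := by
  rw [← Nat.card_eq_finsetCard]
  exact Nat.card_congr (ListPair.fiberEquiv (L := L) a)

/-- The proper colorings of `relCover` are the graphs `{(a, f a)}` of these `f`. -/
theorem PDPCount_relCover :
    PDPCount (relCover G L hsymm hmatch) =
      Nat.card {f : V → ℕ // (∀ a, f a ∈ L a) ∧ ∀ ⦃a b⦄, G.Adj a b → ¬ R a b (f a) (f b)} := by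
  let graph : {f : V → ℕ // (∀ a, f a ∈ L a) ∧ ∀ ⦃a b⦄, G.Adj a b → ¬ R a b (f a) (f b)} →
      {T : Set (ListPair L) // (relCover G L hsymm hmatch).IsProperColoring T} := fun f =>
    ⟨{w | f.1 w.vert = w.color},
      fun a => ⟨ListPair.mk a (f.1 a) (f.2.1 a), by simp, by
        rintro w ⟨hw, hwa⟩
        rw [mem_relCover_L] at hwa
        exact ListPair.ext (by simp [hwa]) (by simpa [hwa] using hw.symm)⟩,
      fun x y (hx : f.1 x.vert = x.color) (hy : f.1 y.vert = y.color) hxy => by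
        rw [relCover_adj, ← hx, ← hy] at hxy
        exact f.2.2 hxy.1 hxy.2⟩
  symm
  refine Nat.card_eq_of_bijective graph ⟨fun f g hfg => Subtype.ext (funext fun a => ?_), ?_⟩
  · have hmem : ListPair.mk a (f.1 a) (f.2.1 a) ∈ (graph g).1 := by
      rw [← hfg]
      simp [graph]
    simpa [graph] using hmem.symm
  · rintro ⟨T, hT⟩
    choose w hw hw_unique using hT.1
    have hwv (a : V) : (w a).vert = a := (hw a).2
    refine ⟨⟨fun a => (w a).color, fun a => ?_, fun a b hab hR => ?_⟩, ?_⟩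
    · simpa [hwv] using (w a).color_mem
    · exact hT.2 (hw a).1 (hw b).1 (by simpa [hwv] using And.intro hab hR)
    · refine Subtype.ext (Set.ext fun x => ⟨fun hx => ?_, fun hx => ?_⟩)
      · have hx' : (w x.vert).color = x.color := hx
        exact ListPair.ext (hwv _) hx' ▸ (hw x.vert).1
      · show (w x.vert).color = x.color
        rw [← hw_unique x.vert x ⟨hx, rfl⟩]

theorem PDP_le_natCard_of_rel {m : ℕ} (hL : ∀ a, #(L a) = m)
    (hsymm : ∀ a b c c', R a b c c' → R b a c' c)
    (hmatch : ∀ a b c c' c'', c' ∈ L b → c'' ∈ L b → R a b c c' → R a b c c'' → c' = c'') :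
    PDP G m ≤
      Nat.card {f : V → ℕ // (∀ a, f a ∈ L a) ∧ ∀ ⦃a b⦄, G.Adj a b → ¬ R a b (f a) (f b)} :=
  Nat.sInf_le ⟨ListPair L, relCover G L hsymm hmatch,
    fun a => (relCover_card_L G L hsymm hmatch a).trans (hL a),
    (PDPCount_relCover G L hsymm hmatch).symm⟩

end ListCover

section Twist

variable {V : Type*} (u v : V) (τ : ℕ → ℕ)

def twistRel (a b : V) (c c' : ℕ) : Prop :=
  (a = u ∧ b = v ∧ c' = τ c) ∨ (a = v ∧ b = u ∧ c = τ c') ∨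
    (¬(a = u ∧ b = v) ∧ ¬(a = v ∧ b = u) ∧ c = c')

variable {u v τ}

theorem twistRel_symm {a b : V} {c c' : ℕ} (h : twistRel u v τ a b c c') :
    twistRel u v τ b a c' c := by
  rcases h with ⟨ha, hb, h⟩ | ⟨ha, hb, h⟩ | ⟨h₁, h₂, h⟩
  · exact Or.inr (Or.inl ⟨hb, ha, h⟩)
  · exact Or.inl ⟨hb, ha, h⟩
  · exact Or.inr (Or.inr ⟨fun h' => h₂ h'.symm, fun h' => h₁ h'.symm, h.symm⟩)

theorem twistRel_unique {L : V → Finset ℕ} (huv : u ≠ v) (hinj : Set.InjOn τ (L u))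
    {a b : V} {c c' c'' : ℕ} (hc' : c' ∈ L b) (hc'' : c'' ∈ L b)
    (h' : twistRel u v τ a b c c') (h'' : twistRel u v τ a b c c'') : c' = c'' := by
  rcases h' with ⟨rfl, rfl, rfl⟩ | ⟨rfl, rfl, h'⟩ | ⟨h₁, h₂, rfl⟩ <;>
    rcases h'' with ⟨ha, hb, h''⟩ | ⟨ha, hb, h''⟩ | ⟨k₁, k₂, h''⟩
  all_goals first
    | exact hinj hc' hc'' (h'.symm.trans h'')
    | grind

variable {G : SimpleGraph V} {L : V → Finset ℕ}

theorem forall_adj_not_twistRel_iff {f : V → ℕ} (huv : G.Adj u v)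
    (hfix : ∀ c ∈ L u, c ∈ L v → τ c = c) (hf : ∀ a, f a ∈ L a) :
    (∀ ⦃a b⦄, G.Adj a b → ¬ twistRel u v τ a b (f a) (f b)) ↔
      ProperLColoring G L f ∧ f v ≠ τ (f u) := by
  constructor
  · intro h
    refine ⟨⟨hf, fun a b hab hfab => h hab ?_⟩, fun hfv => h huv (Or.inl ⟨rfl, rfl, hfv⟩)⟩
    by_cases h₁ : a = u ∧ b = v
    · obtain ⟨rfl, rfl⟩ := h₁
      refine Or.inl ⟨rfl, rfl, ?_⟩
      rw [hfix _ (hf a) (hfab ▸ hf b), hfab]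
    by_cases h₂ : a = v ∧ b = u
    · obtain ⟨rfl, rfl⟩ := h₂
      refine Or.inr (Or.inl ⟨rfl, rfl, ?_⟩)
      rw [hfix _ (hf b) (hfab ▸ hf a), hfab]
    exact Or.inr (Or.inr ⟨h₁, h₂, hfab⟩)
  · rintro ⟨hprop, hne⟩ a b hab (⟨rfl, rfl, h⟩ | ⟨rfl, rfl, h⟩ | ⟨-, -, h⟩)
    · exact hne h
    · exact hne h
    · exact hprop.2 hab h

variable [Fintype V] [DecidableEq V]

theorem natCard_eq_card_filter_piFinset {p : (V → ℕ) → Prop} [DecidablePred p]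
    (hp : ∀ f, p f → ∀ a, f a ∈ L a) :
    Nat.card {f // p f} = #{f ∈ Fintype.piFinset L | p f} := by
  rw [← Nat.card_eq_finsetCard]
  refine Nat.card_congr (Equiv.subtypeEquivRight fun f => ?_)
  simp only [mem_filter, Fintype.mem_piFinset]
  exact ⟨fun h => ⟨hp f h, h⟩, And.right⟩

open Classical in
theorem PList_eq_card_add_card (p : (V → ℕ) → Prop) [DecidablePred p] :
    PList G L = #{f ∈ Fintype.piFinset L | ProperLColoring G L f ∧ p f} +
      #{f ∈ Fintype.piFinset L | ProperLColoring G L f ∧ ¬ p f} := by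
  rw [PList, natCard_eq_card_filter_piFinset fun f h => h.1,
    ← card_filter_add_card_filter_not (s := {f ∈ Fintype.piFinset L | ProperLColoring G L f}) p,
    filter_filter, filter_filter]

open Classical in
theorem PDP_le_card_twisted {m : ℕ} (hL : ∀ a, #(L a) = m) (huv : G.Adj u v)
    (hinj : Set.InjOn τ (L u)) (hfix : ∀ c ∈ L u, c ∈ L v → τ c = c) :
    PDP G m ≤ #{f ∈ Fintype.piFinset L | ProperLColoring G L f ∧ ¬ f v = τ (f u)} := by
  refine (PDP_le_natCard_of_rel G L hL (fun _ _ _ _ => twistRel_symm)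
    (fun _ _ _ _ _ => twistRel_unique huv.ne hinj)).trans_eq ?_
  rw [natCard_eq_card_filter_piFinset fun f h => h.1]
  exact congrArg card (filter_congr fun f hf =>
    (and_iff_right (Fintype.mem_piFinset.1 hf)).trans
      (forall_adj_not_twistRel_iff huv hfix (Fintype.mem_piFinset.1 hf)))

open Classical in
theorem mul_card_sdiff_le_card_twisted {C : ℕ} (huv : G.Adj u v)
    (hmaps : Set.MapsTo τ (L u) (L v)) (hfix : ∀ c ∈ L u, c ∈ L v → τ c = c)
    (hC : ∀ x ∈ L u, ∀ y ∈ L v, x ≠ y →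
      C ≤ Nat.card {f : V → ℕ // ProperLColoring G L f ∧ f u = x ∧ f v = y}) :
    C * #(L u \ L v) ≤ #{f ∈ Fintype.piFinset L | ProperLColoring G L f ∧ f v = τ (f u)} := by
  have hfu : ∀ f ∈ {f ∈ Fintype.piFinset L | ProperLColoring G L f ∧ f v = τ (f u)},
      f u ∈ L u \ L v := by
    intro f hf
    obtain ⟨-, hprop, hfv⟩ := mem_filter.1 hf
    refine mem_sdiff.2 ⟨hprop.1 u, fun hu => hprop.2 huv ?_⟩
    rw [hfv, hfix _ (hprop.1 u) hu]
  rw [card_eq_sum_card_fiberwise fun f hf => hfu f hf, mul_comm, ← smul_eq_mul]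
  refine card_nsmul_le_sum _ _ _ fun x hx => ?_
  obtain ⟨hxu, hxv⟩ := mem_sdiff.1 hx
  calc C ≤ Nat.card {f : V → ℕ // ProperLColoring G L f ∧ f u = x ∧ f v = τ x} :=
        hC x hxu (τ x) (hmaps hxu) fun h => hxv (h ▸ hmaps hxu)
    _ = _ := by
      rw [natCard_eq_card_filter_piFinset fun f h => h.1.1, filter_filter]
      refine congrArg card (filter_congr fun f _ => ?_)
      constructor
      · rintro ⟨hprop, rfl, hfv⟩
        exact ⟨⟨hprop, hfv⟩, rfl⟩
      · rintro ⟨⟨hprop, hfv⟩, rfl⟩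
        exact ⟨hprop, rfl, hfv⟩

end Twist

theorem PList_ge_PDP_add_general {V : Type*} [Fintype V] (G : SimpleGraph V) (m : ℕ)
    (L : V → Finset ℕ) (hL : ∀ v, (L v).card = m) (u v : V) (huv : G.Adj u v)
    (d : ℕ) (hd : (L u \ L v).card = d) (C : ℕ)
    (hC : ∀ x ∈ L u, ∀ y ∈ L v, x ≠ y →
      C ≤ Nat.card {f : V → ℕ // ProperLColoring G L f ∧ f u = x ∧ f v = y}) :
    PDP G m + C * d ≤ PList G L := by
  classical
  obtain ⟨τ, hmaps, hinj, hfix⟩ :=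
    Finset.exists_mapsTo_injOn_eq_self_of_card_le (s := L u) (t := L v) (by rw [hL, hL])
  rw [PList_eq_card_add_card (fun f => f v = τ (f u)), ← hd, add_comm (PDP G m)]
  exact add_le_add (mul_card_sdiff_le_card_twisted huv hmaps hfix hC)
    (PDP_le_card_twisted hL huv hinj hfix)

theorem PList_ge_PDP_add {V : Type*} [Fintype V] (G : SimpleGraph V) (m : ℕ)
    (L : V → Finset ℕ) (hL : ∀ v, (L v).card = m) (u v : V) (huv : G.Adj u v)
    (d : ℕ) (hd : (L u \ L v).card = d) (hd1 : 1 ≤ d) (C : ℕ)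
    (hC : ∀ x ∈ L u, ∀ y ∈ L v, x ≠ y →
      C ≤ Nat.card {f : V → ℕ // ProperLColoring G L f ∧ f u = x ∧ f v = y}) :
    PDP G m + C * d ≤ PList G L :=
  PList_ge_PDP_add_general G m L hL u v huv d hd C hC
end

section
/- Let G = Θ(l1,l2,l3) where min{l1,l2,l3} = l1, l2 ≥ 2, and l3 ≥ 2, and let L be an m-assignment for G with m ≥ 3. Suppose q and s are adjacent vertices in G, x ∈ L(q), y ∈ L(s), and x ≠ y. Then there are at least (m−1)^{l1+l2+l3−5}·(m−2)^2 proper L-colorings of G that color q with x and s with y. -/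
set_option linter.unusedVariables false
set_option linter.unnecessarySeqFocus false
set_option linter.all false


open SimpleGraph Finset

lemma inr_eq_inr {l1 l2 l3 : ℕ} {i0 i1 : Fin 3} {j0 : Fin (![l1,l2,l3] i0 - 1)}
    {j1 : Fin (![l1,l2,l3] i1 - 1)} :
    (Sum.inr ⟨i0, j0⟩ : ThetaVert l1 l2 l3) = Sum.inr ⟨i1, j1⟩ ↔
      (i0 = i1 ∧ (j0 : ℕ) = (j1 : ℕ)) := by
  constructor
  · intro h
    injection h with h'
    obtain ⟨h1, h2⟩ := Sigma.mk.inj_iff.mp h'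
    subst h1
    exact ⟨rfl, congrArg Fin.val (eq_of_heq h2)⟩
  · rintro ⟨rfl, hv⟩
    rw [Fin.ext hv]

/-- position `j` on path `i`: `0 ↦ u`, `≥ lᵢ ↦ v`, else internal vertex. -/
def pv (l1 l2 l3 : ℕ) (i : Fin 3) (j : ℕ) : ThetaVert l1 l2 l3 :=
  if h0 : j = 0 then Sum.inl false
  else if hli : ![l1, l2, l3] i ≤ j then Sum.inl true
  else Sum.inr ⟨i, ⟨j - 1, by omega⟩⟩

lemma pv_eq_inl_false_iff {l1 l2 l3 : ℕ} {i : Fin 3} {t : ℕ} :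
    pv l1 l2 l3 i t = Sum.inl false ↔ t = 0 := by
  unfold pv; split_ifs with h0 h1 <;> simp_all

lemma pv_eq_inl_true_iff {l1 l2 l3 : ℕ} {i : Fin 3} {t : ℕ} :
    pv l1 l2 l3 i t = Sum.inl true ↔ (t ≠ 0 ∧ ![l1, l2, l3] i ≤ t) := by
  unfold pv; split_ifs with h0 h1 <;> simp_all

lemma pv_eq_inr_iff {l1 l2 l3 : ℕ} {i i0 : Fin 3} {t : ℕ} {j0 : Fin (![l1, l2, l3] i0 - 1)} :
    pv l1 l2 l3 i t = Sum.inr ⟨i0, j0⟩ ↔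
      (t ≠ 0 ∧ t < ![l1, l2, l3] i ∧ i0 = i ∧ (j0 : ℕ) = t - 1) := by
  unfold pv; split_ifs with h0 h1
  · simp_all
  · simp only [reduceCtorEq, false_iff]
    rintro ⟨-, h, -, -⟩; omega
  · rw [inr_eq_inr]
    constructor
    · rintro ⟨rfl, hv⟩
      exact ⟨h0, by omega, rfl, hv.symm⟩
    · rintro ⟨-, -, rfl, hv⟩
      exact ⟨rfl, hv.symm⟩

lemma thetaRel_pv {l1 l2 l3 : ℕ} (h1 : 1 ≤ l1) (h2 : 2 ≤ l2) (h3 : 2 ≤ l3)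
    {a b : ThetaVert l1 l2 l3} (h : thetaRel l1 l2 l3 a b) :
    ∃ (i : Fin 3) (k : ℕ), k + 1 ≤ ![l1, l2, l3] i ∧
      pv l1 l2 l3 i k = a ∧ pv l1 l2 l3 i (k + 1) = b := by
  rcases a with (_ | _) | ⟨i0, j0⟩ <;> rcases b with (_ | _) | ⟨i1, j1⟩ <;>
    simp only [thetaRel] at h
  · -- u, v
    refine ⟨0, 0, ?_, pv_eq_inl_false_iff.mpr rfl, ?_⟩
    · show 0 + 1 ≤ l1; omega
    · rw [pv_eq_inl_true_iff]
      refine ⟨one_ne_zero, ?_⟩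
      show l1 ≤ 1; omega
  · -- u, internal
    have hj := j1.isLt
    refine ⟨i1, 0, by omega, pv_eq_inl_false_iff.mpr rfl, ?_⟩
    rw [pv_eq_inr_iff]
    exact ⟨one_ne_zero, by omega, rfl, by omega⟩
  · -- internal, v
    refine ⟨i0, (j0 : ℕ) + 1, by omega, ?_, ?_⟩
    · rw [pv_eq_inr_iff]
      exact ⟨by omega, by omega, rfl, by omega⟩
    · rw [pv_eq_inl_true_iff]
      exact ⟨by omega, by omega⟩
  · -- internal, internal
    obtain ⟨rfl, hj⟩ := h
    have hlt := j1.isLt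
    refine ⟨i0, (j0 : ℕ) + 1, by omega, ?_, ?_⟩ <;> rw [pv_eq_inr_iff]
    · exact ⟨by omega, by omega, rfl, by omega⟩
    · exact ⟨by omega, by omega, rfl, by omega⟩

open Classical in
/-- colorings of `U` from lists `L`, agreeing with `g` off `U`, proper at all
edges touching `U`. -/
noncomputable def colSet {V : Type*} [Fintype V] [DecidableEq V] (G : SimpleGraph V)
    (L : V → Finset ℕ) (U : Finset V) (g : V → ℕ) : Finset (V → ℕ) :=
  (Fintype.piFinset fun v => if v ∈ U then L v else {g v}).filter
    (fun f => ∀ v ∈ U, ∀ w, G.Adj v w → f v ≠ f w)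

lemma colSet_card_ge {V : Type*} [Fintype V] [DecidableEq V] (G : SimpleGraph V)
    (L : V → Finset ℕ) (ρ d : V → ℕ) (U₀ : Finset V)
    (hinj : ∀ a ∈ U₀, ∀ b ∈ U₀, ρ a = ρ b → a = b)
    (hd : ∀ v ∈ U₀, ∀ C : Finset V,
        (∀ w ∈ C, G.Adj v w ∧ (w ∉ U₀ ∨ ρ w < ρ v)) → C.card ≤ d v) :
    ∀ (n : ℕ) (U : Finset V), U.card ≤ n → U ⊆ U₀ →
      (∀ a ∈ U₀, ∀ b ∈ U, ρ b ≤ ρ a → a ∈ U) →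
      ∀ g : V → ℕ, ∏ v ∈ U, ((L v).card - d v) ≤ (colSet G L U g).card := by
  classical
  intro n
  induction n with
  | zero =>
    intro U hcard _ _ g
    have hU : U = ∅ := Finset.card_eq_zero.mp (Nat.le_zero.mp hcard)
    subst hU
    simp only [Finset.prod_empty]
    refine Finset.card_pos.mpr ⟨g, ?_⟩
    simp [colSet]
  | succ n ih =>
    intro U hcard hsub hseg g
    rcases U.eq_empty_or_nonempty with rfl | hne
    · simp only [Finset.prod_empty]
      refine Finset.card_pos.mpr ⟨g, ?_⟩
      simp [colSet]
    · obtain ⟨v, hvU, hvmin⟩ := U.exists_min_image ρ hne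
      have hvU₀ : v ∈ U₀ := hsub hvU
      set U' := U.erase v with hU'
      have hU'card : U'.card ≤ n := by
        have h' : U'.card = U.card - 1 := by rw [hU']; exact Finset.card_erase_of_mem hvU
        have h'' := Finset.card_pos.mpr hne
        omega
      have hU'sub : U' ⊆ U₀ := (Finset.erase_subset _ _).trans hsub
      have hU'seg : ∀ a ∈ U₀, ∀ b ∈ U', ρ b ≤ ρ a → a ∈ U' := by
        intro a ha b hb hle
        have hbU : b ∈ U := Finset.mem_of_mem_erase hb
        have haU : a ∈ U := hseg a ha b hbU hle
        rw [Finset.mem_erase]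
        refine ⟨?_, haU⟩
        rintro rfl
        have h1' : ρ a ≤ ρ b := hvmin b hbU
        have : b = a := hinj b (hsub hbU) a hvU₀ (le_antisymm hle h1')
        exact (Finset.ne_of_mem_erase hb) this
      set T : Finset V := Finset.univ.filter (fun w => G.Adj v w ∧ w ∉ U) with hT
      have hTd : T.card ≤ d v := by
        apply hd v hvU₀
        intro w hw
        rw [hT, Finset.mem_filter] at hw
        refine ⟨hw.2.1, ?_⟩
        by_cases hw0 : w ∈ U₀
        · right
          by_contra hlt
          push_neg at hlt
          exact hw.2.2 (hseg w hw0 v hvU hlt)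
        · exact Or.inl hw0
      set Cc : Finset ℕ := L v \ T.image g with hCc
      have hCcard : (L v).card - d v ≤ Cc.card := by
        have h1' : (L v).card ≤ Cc.card + (T.image g).card := by
          rw [hCc]; exact Finset.card_le_card_sdiff_add_card
        have h2' : (T.image g).card ≤ T.card := Finset.card_image_le
        omega
      have hkey : ∀ c ∈ Cc, colSet G L U' (Function.update g v c) ⊆ colSet G L U g := by
        intro c hc f hf
        rw [hCc, Finset.mem_sdiff] at hc
        simp only [colSet, Finset.mem_filter, Fintype.mem_piFinset] at hf ⊢
        obtain ⟨hpi, hpr⟩ := hf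
        have hvnotU' : v ∉ U' := Finset.notMem_erase _ _
        have hfv : f v = c := by
          have h' := hpi v
          rw [if_neg hvnotU', Finset.mem_singleton, Function.update_self] at h'
          exact h'
        have hoff : ∀ w, w ∉ U → w ≠ v → f w = g w := by
          intro w hwU hwv
          have hw' : w ∉ U' := fun h' => hwU (Finset.mem_of_mem_erase h')
          have h' := hpi w
          rw [if_neg hw', Finset.mem_singleton] at h'
          rwa [Function.update_of_ne hwv] at h'
        constructor
        · intro z
          by_cases hz : z ∈ U
          · rw [if_pos hz]
            by_cases hzv : z = v
            · subst hzv; rw [hfv]; exact hc.1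
            · have hz' : z ∈ U' := Finset.mem_erase.mpr ⟨hzv, hz⟩
              have h' := hpi z; rwa [if_pos hz'] at h'
          · rw [if_neg hz, Finset.mem_singleton]
            have hzv : z ≠ v := fun h' => hz (h' ▸ hvU)
            exact hoff z hz hzv
        · intro a haU w hadj
          by_cases hav : a = v
          · subst hav
            by_cases hwU' : w ∈ U'
            · exact (hpr w hwU' a hadj.symm).symm
            · have hwv : w ≠ a := hadj.ne'
              have hwU : w ∉ U := fun h' => hwU' (Finset.mem_erase.mpr ⟨hwv, h'⟩)
              have hfw : f w = g w := hoff w hwU hwv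
              rw [hfv, hfw]
              intro heq
              apply hc.2
              have hwT : w ∈ T := by
                rw [hT, Finset.mem_filter]
                exact ⟨Finset.mem_univ _, hadj, hwU⟩
              rw [heq]
              exact Finset.mem_image_of_mem g hwT
          · have haU' : a ∈ U' := Finset.mem_erase.mpr ⟨hav, haU⟩
            exact hpr a haU' w hadj
      have hdisj : ∀ c1 ∈ Cc, ∀ c2 ∈ Cc, c1 ≠ c2 →
          Disjoint (colSet G L U' (Function.update g v c1))
            (colSet G L U' (Function.update g v c2)) := by
        intro c1 _ c2 _ hne12
        rw [Finset.disjoint_left]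
        intro f hf1 hf2
        apply hne12
        have hval' : ∀ c, f ∈ colSet G L U' (Function.update g v c) → f v = c := by
          intro c h'
          simp only [colSet, Finset.mem_filter, Fintype.mem_piFinset] at h'
          have h'' := h'.1 v
          rwa [if_neg (Finset.notMem_erase _ _), Finset.mem_singleton,
            Function.update_self] at h''
        rw [← hval' c1 hf1, ← hval' c2 hf2]
      calc ∏ w ∈ U, ((L w).card - d w)
          = ((L v).card - d v) * ∏ w ∈ U', ((L w).card - d w) :=
            (Finset.mul_prod_erase U _ hvU).symm
        _ ≤ Cc.card * ∏ w ∈ U', ((L w).card - d w) :=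
            Nat.mul_le_mul_right _ hCcard
        _ ≤ ∑ c ∈ Cc, (colSet G L U' (Function.update g v c)).card := by
            have h' := Finset.card_nsmul_le_sum Cc
              (fun c => (colSet G L U' (Function.update g v c)).card)
              (∏ w ∈ U', ((L w).card - d w))
              (fun c _ => ih U' hU'card hU'sub hU'seg (Function.update g v c))
            simpa [smul_eq_mul] using h'
        _ = (Cc.biUnion fun c => colSet G L U' (Function.update g v c)).card :=
            (Finset.card_biUnion hdisj).symm
        _ ≤ (colSet G L U g).card :=
            Finset.card_le_card (Finset.biUnion_subset.mpr hkey)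

/-- rank (elimination order) for the greedy coloring of the theta graph. -/
def rnk (l1 l2 l3 : ℕ) (i : Fin 3) (k : ℕ) : ThetaVert l1 l2 l3 → ℕ
  | Sum.inl false => k - 1
  | Sum.inl true => ![l1, l2, l3] i - 2
  | Sum.inr ⟨i0, j0⟩ =>
      if i0 = i then (if (j0 : ℕ) + 2 ≤ k then k - 2 - (j0 : ℕ) else (j0 : ℕ) - 1)
      else (l1 + l2 + l3) + (i0 : ℕ) + 3 * (j0 : ℕ)

/-- back-degree bound for the greedy coloring. -/
def dg (l1 l2 l3 : ℕ) (i : Fin 3) (k : ℕ) : ThetaVert l1 l2 l3 → ℕ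
  | Sum.inl false => if l1 = 1 ∧ (i : ℕ) ≠ 0 ∧ k + 1 = ![l1, l2, l3] i then 2 else 1
  | Sum.inl true => if l1 = 1 ∧ (i : ℕ) ≠ 0 ∧ k + 1 ≠ ![l1, l2, l3] i then 2 else 1
  | Sum.inr ⟨i0, j0⟩ => if i0 ≠ i ∧ (j0 : ℕ) + 2 = ![l1, l2, l3] i0 then 2 else 1

set_option maxHeartbeats 2000000 in
theorem theta_count_colorings_fixing_edge (l1 l2 l3 : ℕ)
    (h1 : 1 ≤ l1) (h2 : 2 ≤ l2) (h3 : 2 ≤ l3) (hmin : min l1 (min l2 l3) = l1)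
    (m : ℕ) (hm : 3 ≤ m)
    (L : ThetaVert l1 l2 l3 → Finset ℕ) (hL : ∀ w, (L w).card = m)
    (q s : ThetaVert l1 l2 l3) (hqs : (thetaGraph l1 l2 l3).Adj q s)
    (x y : ℕ) (hx : x ∈ L q) (hy : y ∈ L s) (hxy : x ≠ y) :
    (m - 1) ^ (l1 + l2 + l3 - 5) * (m - 2) ^ 2 ≤
      Nat.card {f : ThetaVert l1 l2 l3 → ℕ //
        ProperLColoring (thetaGraph l1 l2 l3) L f ∧ f q = x ∧ f s = y} := by
  classical
  -- Step 1: extract the edge position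
  have hadj := hqs
  simp only [thetaGraph, SimpleGraph.fromRel_adj] at hadj
  obtain ⟨hneqs, hrel⟩ := hadj
  obtain ⟨i, k, hkli, hQS⟩ : ∃ (i : Fin 3) (k : ℕ), k + 1 ≤ ![l1, l2, l3] i ∧
      ((pv l1 l2 l3 i k = q ∧ pv l1 l2 l3 i (k + 1) = s) ∨
        (pv l1 l2 l3 i k = s ∧ pv l1 l2 l3 i (k + 1) = q)) := by
    rcases hrel with h | h
    · obtain ⟨i, k, hk, ha, hb⟩ := thetaRel_pv h1 h2 h3 h
      exact ⟨i, k, hk, Or.inl ⟨ha, hb⟩⟩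
    · obtain ⟨i, k, hk, ha, hb⟩ := thetaRel_pv h1 h2 h3 h
      exact ⟨i, k, hk, Or.inr ⟨ha, hb⟩⟩
  set U₀ : Finset (ThetaVert l1 l2 l3) := Finset.univ \ {q, s} with hU₀def
  have hpair : ∀ w : ThetaVert l1 l2 l3,
      w ∈ U₀ ↔ (w ≠ pv l1 l2 l3 i k ∧ w ≠ pv l1 l2 l3 i (k + 1)) := by
    intro w
    rw [hU₀def]
    simp only [Finset.mem_sdiff, Finset.mem_univ, true_and, Finset.mem_insert,
      Finset.mem_singleton]
    rcases hQS with ⟨e1, e2⟩ | ⟨e1, e2⟩ <;> rw [e1, e2] <;> tauto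
  -- basic numeric facts about the lengths
  have hval : ∀ j : Fin 3, (1 ≤ ![l1, l2, l3] j ∧ ![l1, l2, l3] j ≤ l1 + l2 + l3) ∧
      ((j : ℕ) = 0 → ![l1, l2, l3] j = l1) ∧ ((j : ℕ) ≠ 0 → 2 ≤ ![l1, l2, l3] j) := by
    intro j; fin_cases j <;> simp <;> omega
  have hBli : ![l1, l2, l3] i ≤ l1 + l2 + l3 := (hval i).1.2
  -- membership helpers
  have hUu : (Sum.inl false : ThetaVert l1 l2 l3) ∈ U₀ → k ≠ 0 := by
    intro h hk0
    exact ((hpair _).mp h).1 (pv_eq_inl_false_iff.mpr hk0).symm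
  have hUv : (Sum.inl true : ThetaVert l1 l2 l3) ∈ U₀ → k + 1 < ![l1, l2, l3] i := by
    intro h
    by_contra hc
    push_neg at hc
    exact ((hpair _).mp h).2 (pv_eq_inl_true_iff.mpr ⟨Nat.succ_ne_zero k, hc⟩).symm
  have hUr : ∀ (j0 : Fin (![l1, l2, l3] i - 1)),
      (Sum.inr ⟨i, j0⟩ : ThetaVert l1 l2 l3) ∈ U₀ → ((j0 : ℕ) + 1 ≠ k ∧ (j0 : ℕ) ≠ k) := by
    intro j0 h
    have hpl := (hpair _).mp h
    have hjlt := j0.isLt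
    constructor
    · intro he
      exact hpl.1 (pv_eq_inr_iff.mpr ⟨by omega, by omega, rfl, by omega⟩).symm
    · intro he
      exact hpl.2 (pv_eq_inr_iff.mpr ⟨by omega, by omega, rfl, by omega⟩).symm
  have hUu' : k ≠ 0 → (Sum.inl false : ThetaVert l1 l2 l3) ∈ U₀ := by
    intro hk0
    rw [hpair]
    constructor
    · intro he; exact hk0 (pv_eq_inl_false_iff.mp he.symm)
    · intro he; exact absurd (pv_eq_inl_false_iff.mp he.symm) (by omega)
  have hUv' : k + 1 < ![l1, l2, l3] i → (Sum.inl true : ThetaVert l1 l2 l3) ∈ U₀ := by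
    intro hlt
    rw [hpair]
    constructor
    · intro he; have := pv_eq_inl_true_iff.mp he.symm; omega
    · intro he; have := pv_eq_inl_true_iff.mp he.symm; omega
  have hUr' : ∀ (i0 : Fin 3) (j0 : Fin (![l1, l2, l3] i0 - 1)),
      (i0 ≠ i ∨ ((j0 : ℕ) + 1 ≠ k ∧ (j0 : ℕ) ≠ k)) →
      (Sum.inr ⟨i0, j0⟩ : ThetaVert l1 l2 l3) ∈ U₀ := by
    intro i0 j0 hcond
    rw [hpair]
    constructor
    · intro he
      obtain ⟨h0', hlt', heq', hval'⟩ := pv_eq_inr_iff.mp he.symm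
      rcases hcond with h | h
      · exact h heq'
      · omega
    · intro he
      obtain ⟨h0', hlt', heq', hval'⟩ := pv_eq_inr_iff.mp he.symm
      rcases hcond with h | h
      · exact h heq'
      · omega
  -- injectivity of the rank function on U₀
  have hinj : ∀ a ∈ U₀, ∀ b ∈ U₀, rnk l1 l2 l3 i k a = rnk l1 l2 l3 i k b → a = b := by
    intro a ha b hb hab
    rcases a with (_ | _) | ⟨ia, ja⟩ <;> rcases b with (_ | _) | ⟨ib, jb⟩ <;>
      simp only [rnk] at hab
    · rfl
    · exact absurd hab (by have := hUu ha; have := hUv hb; omega)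
    · exfalso
      have hk0 := hUu ha
      by_cases hib : ib = i
      · subst hib
        have hjb := jb.isLt
        have hcon := hUr _ hb
        split_ifs at hab <;> omega
      · have hjb := jb.isLt
        have hvb := (hval ib).1.2
        rw [if_neg hib] at hab
        omega
    · exact absurd hab (by have := hUv ha; have := hUu hb; omega)
    · rfl
    · exfalso
      have hk2 := hUv ha
      by_cases hib : ib = i
      · subst hib
        have hjb := jb.isLt
        have hcon := hUr _ hb
        split_ifs at hab <;> omega
      · have hjb := jb.isLt
        have hvb := (hval ib).1.2
        rw [if_neg hib] at hab
        omega
    · exfalso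
      have hk0 := hUu hb
      by_cases hia : ia = i
      · subst hia
        have hja := ja.isLt
        have hcon := hUr _ ha
        split_ifs at hab <;> omega
      · have hja := ja.isLt
        have hva := (hval ia).1.2
        rw [if_neg hia] at hab
        omega
    · exfalso
      have hk2 := hUv hb
      by_cases hia : ia = i
      · subst hia
        have hja := ja.isLt
        have hcon := hUr _ ha
        split_ifs at hab <;> omega
      · have hja := ja.isLt
        have hva := (hval ia).1.2
        rw [if_neg hia] at hab
        omega
    · have hja := ja.isLt
      have hjb := jb.isLt
      have hia3 := ia.isLt
      have hib3 := ib.isLt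
      have hva := (hval ia).1.2
      have hvb := (hval ib).1.2
      by_cases hia : ia = i <;> by_cases hib : ib = i
      · subst hia; subst hib
        have hca := hUr _ ha
        have hcb := hUr _ hb
        rw [if_pos rfl, if_pos rfl] at hab
        have hvv : (ja : ℕ) = (jb : ℕ) := by split_ifs at hab <;> omega
        rw [inr_eq_inr]
        exact ⟨rfl, hvv⟩
      · exfalso
        subst hia
        have hca := hUr _ ha
        rw [if_pos rfl, if_neg hib] at hab
        split_ifs at hab <;> omega
      · exfalso
        subst hib
        have hcb := hUr _ hb
        rw [if_neg hia, if_pos rfl] at hab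
        split_ifs at hab <;> omega
      · rw [if_neg hia, if_neg hib] at hab
        have hvv : (ia : ℕ) = (ib : ℕ) ∧ (ja : ℕ) = (jb : ℕ) := by omega
        have : ia = ib := Fin.ext hvv.1
        subst this
        rw [inr_eq_inr]
        exact ⟨rfl, hvv.2⟩
  -- rank evaluation lemmas
  have hrnk_u : rnk l1 l2 l3 i k (Sum.inl false) = k - 1 := rfl
  have hrnk_v : rnk l1 l2 l3 i k (Sum.inl true) = ![l1, l2, l3] i - 2 := rfl
  have hrnk_same : ∀ (j : Fin (![l1, l2, l3] i - 1)),
      rnk l1 l2 l3 i k (Sum.inr ⟨i, j⟩) =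
        (if (j : ℕ) + 2 ≤ k then k - 2 - (j : ℕ) else (j : ℕ) - 1) := by
    intro j; simp [rnk]
  have hrnk_other : ∀ (i1 : Fin 3) (j : Fin (![l1, l2, l3] i1 - 1)), i1 ≠ i →
      rnk l1 l2 l3 i k (Sum.inr ⟨i1, j⟩) = (l1 + l2 + l3) + (i1 : ℕ) + 3 * (j : ℕ) := by
    intro i1 j h; simp [rnk, h]
  -- the back-degree bound
  have hd : ∀ v ∈ U₀, ∀ C : Finset (ThetaVert l1 l2 l3),
      (∀ w ∈ C, (thetaGraph l1 l2 l3).Adj v w ∧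
        (w ∉ U₀ ∨ rnk l1 l2 l3 i k w < rnk l1 l2 l3 i k v)) →
      C.card ≤ dg l1 l2 l3 i k v := by
    intro v hv C hC
    rcases v with (_ | _) | ⟨i0, j0⟩
    · -- v = u
      have hk0 : k ≠ 0 := hUu hv
      have hli2 : 2 ≤ ![l1, l2, l3] i := by omega
      by_cases hcase : l1 = 1 ∧ (i : ℕ) ≠ 0 ∧ k + 1 = ![l1, l2, l3] i
      · have hsub : C ⊆ {Sum.inr ⟨i, ⟨0, by omega⟩⟩, Sum.inl true} := by
          intro w hw
          obtain ⟨hadj, hearly⟩ := hC w hw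
          simp only [thetaGraph, SimpleGraph.fromRel_adj] at hadj
          obtain ⟨hne, hrel'⟩ := hadj
          rcases w with (_ | _) | ⟨i1, j1⟩
          · exact absurd rfl hne
          · simp
          · simp only [thetaRel] at hrel'
            have hj1 : (j1 : ℕ) = 0 := hrel'.resolve_right id
            by_cases hi1 : i1 = i
            · subst i1
              simp only [Finset.mem_insert, Finset.mem_singleton]
              left
              rw [inr_eq_inr]
              refine ⟨rfl, ?_⟩
              simp only [Fin.val_mk]
              omega
            · exfalso
              have hmem := hUr' i1 j1 (Or.inl hi1)
              have hrk : ¬ rnk l1 l2 l3 i k (Sum.inr ⟨i1, j1⟩) <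
                  rnk l1 l2 l3 i k (Sum.inl false) := by
                rw [hrnk_other i1 j1 hi1, hrnk_u]; omega
              rcases hearly with h | h
              · exact h hmem
              · exact hrk h
        have hdgv : dg l1 l2 l3 i k (Sum.inl false) = 2 := by
          simp only [dg, if_pos hcase]
        rw [hdgv]
        exact (Finset.card_le_card hsub).trans ((Finset.card_insert_le _ _).trans (by simp))
      · have hsub : C ⊆ {(Sum.inr ⟨i, ⟨0, by omega⟩⟩ : ThetaVert l1 l2 l3)} := by
          intro w hw
          obtain ⟨hadj, hearly⟩ := hC w hw
          simp only [thetaGraph, SimpleGraph.fromRel_adj] at hadj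
          obtain ⟨hne, hrel'⟩ := hadj
          rcases w with (_ | _) | ⟨i1, j1⟩
          · exact absurd rfl hne
          · exfalso
            simp only [thetaRel] at hrel'
            have hl1 : l1 = 1 := by have := hrel'.resolve_right id; omega
            have hi00 : (i : ℕ) ≠ 0 := by
              intro h0
              have := (hval i).2.1 h0
              omega
            have hklt : k + 1 < ![l1, l2, l3] i := by
              rcases Nat.lt_or_ge (k + 1) (![l1, l2, l3] i) with h | h
              · exact h
              · exact absurd ⟨hl1, hi00, by omega⟩ hcase
            have hmem := hUv' hklt
            have hrk : ¬ rnk l1 l2 l3 i k (Sum.inl true) <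
                rnk l1 l2 l3 i k (Sum.inl false) := by
              rw [hrnk_v, hrnk_u]; omega
            rcases hearly with h | h
            · exact h hmem
            · exact hrk h
          · simp only [thetaRel] at hrel'
            have hj1 : (j1 : ℕ) = 0 := hrel'.resolve_right id
            by_cases hi1 : i1 = i
            · subst i1
              simp only [Finset.mem_singleton]
              rw [inr_eq_inr]
              refine ⟨rfl, ?_⟩
              simp only [Fin.val_mk]
              omega
            · exfalso
              have hmem := hUr' i1 j1 (Or.inl hi1)
              have hrk : ¬ rnk l1 l2 l3 i k (Sum.inr ⟨i1, j1⟩) <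
                  rnk l1 l2 l3 i k (Sum.inl false) := by
                rw [hrnk_other i1 j1 hi1, hrnk_u]; omega
              rcases hearly with h | h
              · exact h hmem
              · exact hrk h
        have hdgv : dg l1 l2 l3 i k (Sum.inl false) = 1 := by
          simp only [dg, if_neg hcase]
        rw [hdgv]
        exact (Finset.card_le_card hsub).trans (by simp)
    · -- v = top end vertex
      have hklt : k + 1 < ![l1, l2, l3] i := hUv hv
      have hli2 : 2 ≤ ![l1, l2, l3] i := by omega
      by_cases hcase : l1 = 1 ∧ (i : ℕ) ≠ 0 ∧ k + 1 ≠ ![l1, l2, l3] i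
      · have hsub : C ⊆ {Sum.inr ⟨i, ⟨![l1, l2, l3] i - 2, by omega⟩⟩, Sum.inl false} := by
          intro w hw
          obtain ⟨hadj, hearly⟩ := hC w hw
          simp only [thetaGraph, SimpleGraph.fromRel_adj] at hadj
          obtain ⟨hne, hrel'⟩ := hadj
          rcases w with (_ | _) | ⟨i1, j1⟩
          · simp
          · exact absurd rfl hne
          · simp only [thetaRel] at hrel'
            have hj1 : (j1 : ℕ) + 2 = ![l1, l2, l3] i1 := hrel'.resolve_left id
            by_cases hi1 : i1 = i
            · subst i1
              simp only [Finset.mem_insert, Finset.mem_singleton]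
              left
              rw [inr_eq_inr]
              refine ⟨rfl, ?_⟩
              simp only [Fin.val_mk]
              omega
            · exfalso
              have hmem := hUr' i1 j1 (Or.inl hi1)
              have hrk : ¬ rnk l1 l2 l3 i k (Sum.inr ⟨i1, j1⟩) <
                  rnk l1 l2 l3 i k (Sum.inl true) := by
                rw [hrnk_other i1 j1 hi1, hrnk_v]; omega
              rcases hearly with h | h
              · exact h hmem
              · exact hrk h
        have hdgv : dg l1 l2 l3 i k (Sum.inl true) = 2 := by
          simp only [dg, if_pos hcase]
        rw [hdgv]
        exact (Finset.card_le_card hsub).trans ((Finset.card_insert_le _ _).trans (by simp))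
      · have hsub : C ⊆ {(Sum.inr ⟨i, ⟨![l1, l2, l3] i - 2, by omega⟩⟩ : ThetaVert l1 l2 l3)} := by
          intro w hw
          obtain ⟨hadj, hearly⟩ := hC w hw
          simp only [thetaGraph, SimpleGraph.fromRel_adj] at hadj
          obtain ⟨hne, hrel'⟩ := hadj
          rcases w with (_ | _) | ⟨i1, j1⟩
          · exfalso
            simp only [thetaRel] at hrel'
            have hl1 : l1 = 1 := by have := hrel'.resolve_left id; omega
            have hi00 : (i : ℕ) ≠ 0 := by
              intro h0
              have := (hval i).2.1 h0
              omega
            exact hcase ⟨hl1, hi00, by omega⟩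
          · exact absurd rfl hne
          · simp only [thetaRel] at hrel'
            have hj1 : (j1 : ℕ) + 2 = ![l1, l2, l3] i1 := hrel'.resolve_left id
            by_cases hi1 : i1 = i
            · subst i1
              simp only [Finset.mem_singleton]
              rw [inr_eq_inr]
              refine ⟨rfl, ?_⟩
              simp only [Fin.val_mk]
              omega
            · exfalso
              have hmem := hUr' i1 j1 (Or.inl hi1)
              have hrk : ¬ rnk l1 l2 l3 i k (Sum.inr ⟨i1, j1⟩) <
                  rnk l1 l2 l3 i k (Sum.inl true) := by
                rw [hrnk_other i1 j1 hi1, hrnk_v]; omega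
              rcases hearly with h | h
              · exact h hmem
              · exact hrk h
        have hdgv : dg l1 l2 l3 i k (Sum.inl true) = 1 := by
          simp only [dg, if_neg hcase]
        rw [hdgv]
        exact (Finset.card_le_card hsub).trans (by simp)
    · -- v internal
      have hj0 := j0.isLt
      by_cases hi0 : i0 = i
      · subst i0
        have hcon := hUr _ hv
        have hdgv : dg l1 l2 l3 i k (Sum.inr ⟨i, j0⟩) = 1 := by
          simp only [dg]
          rw [if_neg (by simp)]
        rw [hdgv]
        by_cases hblk : (j0 : ℕ) + 2 ≤ k
        · have hsub : C ⊆ {(Sum.inr ⟨i, ⟨(j0 : ℕ) + 1, by omega⟩⟩ : ThetaVert l1 l2 l3)} := by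
            intro w hw
            obtain ⟨hadj, hearly⟩ := hC w hw
            simp only [thetaGraph, SimpleGraph.fromRel_adj] at hadj
            obtain ⟨hne, hrel'⟩ := hadj
            rcases w with (_ | _) | ⟨i1, j1⟩
            · exfalso
              simp only [thetaRel] at hrel'
              have hj00 : (j0 : ℕ) = 0 := hrel'.resolve_left id
              have hmem := hUu' (by omega)
              have hrk : ¬ rnk l1 l2 l3 i k (Sum.inl false) <
                  rnk l1 l2 l3 i k (Sum.inr ⟨i, j0⟩) := by
                rw [hrnk_u, hrnk_same]; split_ifs <;> omega
              rcases hearly with h | h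
              · exact h hmem
              · exact hrk h
            · exfalso
              simp only [thetaRel] at hrel'
              have : (j0 : ℕ) + 2 = ![l1, l2, l3] i := hrel'.resolve_right id
              omega
            · simp only [thetaRel] at hrel'
              rcases hrel' with ⟨hi1, hj1⟩ | ⟨hi1, hj1⟩
              · subst i1
                simp only [Finset.mem_singleton]
                rw [inr_eq_inr]
                refine ⟨rfl, ?_⟩
                simp only [Fin.val_mk]
                omega
              · exfalso
                subst i1
                have hmem := hUr' i j1 (Or.inr ⟨by omega, by omega⟩)
                have hrk : ¬ rnk l1 l2 l3 i k (Sum.inr ⟨i, j1⟩) <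
                    rnk l1 l2 l3 i k (Sum.inr ⟨i, j0⟩) := by
                  rw [hrnk_same, hrnk_same]; split_ifs <;> omega
                rcases hearly with h | h
                · exact h hmem
                · exact hrk h
          exact (Finset.card_le_card hsub).trans (by simp)
        · have hge : k + 1 ≤ (j0 : ℕ) := by omega
          have hsub : C ⊆ {(Sum.inr ⟨i, ⟨(j0 : ℕ) - 1, by omega⟩⟩ : ThetaVert l1 l2 l3)} := by
            intro w hw
            obtain ⟨hadj, hearly⟩ := hC w hw
            simp only [thetaGraph, SimpleGraph.fromRel_adj] at hadj
            obtain ⟨hne, hrel'⟩ := hadj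
            rcases w with (_ | _) | ⟨i1, j1⟩
            · exfalso
              simp only [thetaRel] at hrel'
              have hj00 : (j0 : ℕ) = 0 := hrel'.resolve_left id
              omega
            · exfalso
              simp only [thetaRel] at hrel'
              have hlst : (j0 : ℕ) + 2 = ![l1, l2, l3] i := hrel'.resolve_right id
              have hmem := hUv' (by omega)
              have hrk : ¬ rnk l1 l2 l3 i k (Sum.inl true) <
                  rnk l1 l2 l3 i k (Sum.inr ⟨i, j0⟩) := by
                rw [hrnk_v, hrnk_same]; split_ifs <;> omega
              rcases hearly with h | h
              · exact h hmem
              · exact hrk h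
            · simp only [thetaRel] at hrel'
              rcases hrel' with ⟨hi1, hj1⟩ | ⟨hi1, hj1⟩
              · exfalso
                subst i1
                have hj1lt := j1.isLt
                have hmem := hUr' i j1 (Or.inr ⟨by omega, by omega⟩)
                have hrk : ¬ rnk l1 l2 l3 i k (Sum.inr ⟨i, j1⟩) <
                    rnk l1 l2 l3 i k (Sum.inr ⟨i, j0⟩) := by
                  rw [hrnk_same, hrnk_same]; split_ifs <;> omega
                rcases hearly with h | h
                · exact h hmem
                · exact hrk h
              · subst i1
                simp only [Finset.mem_singleton]
                rw [inr_eq_inr]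
                refine ⟨rfl, ?_⟩
                simp only [Fin.val_mk]
                omega
          exact (Finset.card_le_card hsub).trans (by simp)
      · -- v internal on another path
        have hva := (hval i0).1.2
        by_cases hlast : (j0 : ℕ) + 2 = ![l1, l2, l3] i0
        · have hdgv : dg l1 l2 l3 i k (Sum.inr ⟨i0, j0⟩) = 2 := by
            simp only [dg]; rw [if_pos ⟨hi0, hlast⟩]
          rw [hdgv]
          have hsub : C ⊆ {(if _h : (j0 : ℕ) = 0 then (Sum.inl false) else
              (Sum.inr ⟨i0, ⟨(j0 : ℕ) - 1, by omega⟩⟩) : ThetaVert l1 l2 l3), Sum.inl true} := by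
            intro w hw
            obtain ⟨hadj, hearly⟩ := hC w hw
            simp only [thetaGraph, SimpleGraph.fromRel_adj] at hadj
            obtain ⟨hne, hrel'⟩ := hadj
            rcases w with (_ | _) | ⟨i1, j1⟩
            · simp only [thetaRel] at hrel'
              have hj00 : (j0 : ℕ) = 0 := hrel'.resolve_left id
              simp only [Finset.mem_insert, Finset.mem_singleton]
              left
              rw [dif_pos hj00]
            · simp
            · simp only [thetaRel] at hrel'
              rcases hrel' with ⟨hi1, hj1⟩ | ⟨hi1, hj1⟩
              · exfalso
                subst i1
                have := j1.isLt
                omega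
              · subst i1
                simp only [Finset.mem_insert, Finset.mem_singleton]
                left
                rw [dif_neg (show ¬(j0 : ℕ) = 0 by omega)]
                rw [inr_eq_inr]
                refine ⟨rfl, ?_⟩
                simp only [Fin.val_mk]
                omega
          exact (Finset.card_le_card hsub).trans ((Finset.card_insert_le _ _).trans (by simp))
        · have hdgv : dg l1 l2 l3 i k (Sum.inr ⟨i0, j0⟩) = 1 := by
            simp only [dg]; rw [if_neg (by tauto)]
          rw [hdgv]
          have hsub : C ⊆ {(if _h : (j0 : ℕ) = 0 then (Sum.inl false) else
              (Sum.inr ⟨i0, ⟨(j0 : ℕ) - 1, by omega⟩⟩) : ThetaVert l1 l2 l3)} := by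
            intro w hw
            obtain ⟨hadj, hearly⟩ := hC w hw
            simp only [thetaGraph, SimpleGraph.fromRel_adj] at hadj
            obtain ⟨hne, hrel'⟩ := hadj
            rcases w with (_ | _) | ⟨i1, j1⟩
            · simp only [thetaRel] at hrel'
              have hj00 : (j0 : ℕ) = 0 := hrel'.resolve_left id
              simp only [Finset.mem_singleton]
              rw [dif_pos hj00]
            · exfalso
              simp only [thetaRel] at hrel'
              have : (j0 : ℕ) + 2 = ![l1, l2, l3] i0 := hrel'.resolve_right id
              exact hlast this
            · simp only [thetaRel] at hrel'
              rcases hrel' with ⟨hi1, hj1⟩ | ⟨hi1, hj1⟩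
              · exfalso
                subst i1
                have hmem := hUr' i0 j1 (Or.inl hi0)
                have hrk : ¬ rnk l1 l2 l3 i k (Sum.inr ⟨i0, j1⟩) <
                    rnk l1 l2 l3 i k (Sum.inr ⟨i0, j0⟩) := by
                  rw [hrnk_other i0 j1 hi0, hrnk_other i0 j0 hi0]; omega
                rcases hearly with h | h
                · exact h hmem
                · exact hrk h
              · subst i1
                simp only [Finset.mem_singleton]
                rw [dif_neg (show ¬(j0 : ℕ) = 0 by omega)]
                rw [inr_eq_inr]
                refine ⟨rfl, ?_⟩
                simp only [Fin.val_mk]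
                omega
          exact (Finset.card_le_card hsub).trans (by simp)
  -- cardinality of U₀
  have hVcard : Fintype.card (ThetaVert l1 l2 l3) = l1 + l2 + l3 - 1 := by
    have hc : Fintype.card (ThetaVert l1 l2 l3) =
        Fintype.card Bool + ∑ j : Fin 3, (![l1, l2, l3] j - 1) := by
      rw [Fintype.card_sum, Fintype.card_sigma]
      simp
    rw [hc, Fin.sum_univ_three]
    have e0 : ![l1, l2, l3] (0 : Fin 3) = l1 := rfl
    have e1 : ![l1, l2, l3] (1 : Fin 3) = l2 := rfl
    have e2 : ![l1, l2, l3] (2 : Fin 3) = l3 := rfl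
    rw [e0, e1, e2, Fintype.card_bool]
    omega
  have hcardU₀ : U₀.card = l1 + l2 + l3 - 3 := by
    rw [hU₀def, Finset.card_sdiff_of_subset (Finset.subset_univ _), Finset.card_univ, hVcard,
      Finset.card_pair hneqs]
    omega
  -- at most two vertices have back-degree bound 2
  have hc2le : (U₀.filter (fun v => dg l1 l2 l3 i k v = 2)).card ≤ 2 := by
    by_cases hL1 : l1 = 1 ∧ (i : ℕ) ≠ 0
    · obtain ⟨hl1, hi0⟩ := hL1
      have hii := i.isLt
      set i' : Fin 3 := ⟨3 - (i : ℕ), by omega⟩ with hi'def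
      have hi'v : (i' : ℕ) = 3 - (i : ℕ) := rfl
      have hi'2 : 2 ≤ ![l1, l2, l3] i' := (hval i').2.2 (by omega)
      have hsub : U₀.filter (fun v => dg l1 l2 l3 i k v = 2) ⊆
          {(if k + 1 = ![l1, l2, l3] i then (Sum.inl false) else (Sum.inl true) :
              ThetaVert l1 l2 l3),
            Sum.inr ⟨i', ⟨![l1, l2, l3] i' - 2, by omega⟩⟩} := by
        intro w hw
        obtain ⟨hwU, hw2⟩ := Finset.mem_filter.mp hw
        rcases w with (_ | _) | ⟨i1, j1⟩
        · simp only [dg] at hw2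
          split_ifs at hw2 with h
          · simp only [Finset.mem_insert, Finset.mem_singleton]
            left
            rw [if_pos h.2.2]
          · exact absurd hw2 (by norm_num)
        · simp only [dg] at hw2
          split_ifs at hw2 with h
          · simp only [Finset.mem_insert, Finset.mem_singleton]
            left
            rw [if_neg h.2.2]
          · exact absurd hw2 (by norm_num)
        · simp only [dg] at hw2
          split_ifs at hw2 with h
          swap
          · exact absurd hw2 (by norm_num)
          obtain ⟨hne', hlast⟩ := h
          have hj1lt := j1.isLt
          have hi10 : (i1 : ℕ) ≠ 0 := by
            intro h0
            have := (hval i1).2.1 h0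
            omega
          have hi1i : (i1 : ℕ) ≠ (i : ℕ) := fun hh => hne' (Fin.ext hh)
          have hi13 := i1.isLt
          have hveq : i1 = i' := Fin.ext (by omega)
          subst i1
          simp only [Finset.mem_insert, Finset.mem_singleton]
          right
          rw [inr_eq_inr]
          refine ⟨rfl, ?_⟩
          simp only [Fin.val_mk]
          omega
      exact (Finset.card_le_card hsub).trans ((Finset.card_insert_le _ _).trans (by simp))
    · set ia : Fin 3 := if (i : ℕ) = 0 then 1 else 0 with hiadef
      set ib : Fin 3 := if (i : ℕ) = 2 then 1 else 2 with hibdef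
      have hiaval : (ia : ℕ) = if (i : ℕ) = 0 then 1 else 0 := by
        rw [hiadef]; split_ifs <;> rfl
      have hibval : (ib : ℕ) = if (i : ℕ) = 2 then 1 else 2 := by
        rw [hibdef]; split_ifs <;> rfl
      have hii := i.isLt
      have hla : 2 ≤ ![l1, l2, l3] ia := by
        by_cases h0 : (i : ℕ) = 0
        · exact (hval ia).2.2 (by rw [hiaval, if_pos h0]; omega)
        · have hz : (ia : ℕ) = 0 := by rw [hiaval, if_neg h0]
          rw [(hval ia).2.1 hz]
          have : l1 ≠ 1 := fun he => hL1 ⟨he, h0⟩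
          omega
      have hlb : 2 ≤ ![l1, l2, l3] ib := by
        refine (hval ib).2.2 ?_
        rw [hibval]; split_ifs <;> omega
      have hsub : U₀.filter (fun v => dg l1 l2 l3 i k v = 2) ⊆
          {(Sum.inr ⟨ia, ⟨![l1, l2, l3] ia - 2, by omega⟩⟩ : ThetaVert l1 l2 l3),
            Sum.inr ⟨ib, ⟨![l1, l2, l3] ib - 2, by omega⟩⟩} := by
        intro w hw
        obtain ⟨hwU, hw2⟩ := Finset.mem_filter.mp hw
        rcases w with (_ | _) | ⟨i1, j1⟩
        · simp only [dg] at hw2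
          split_ifs at hw2 with h
          · exact absurd ⟨h.1, h.2.1⟩ hL1
          · exact absurd hw2 (by norm_num)
        · simp only [dg] at hw2
          split_ifs at hw2 with h
          · exact absurd ⟨h.1, h.2.1⟩ hL1
          · exact absurd hw2 (by norm_num)
        · simp only [dg] at hw2
          split_ifs at hw2 with h
          swap
          · exact absurd hw2 (by norm_num)
          obtain ⟨hne', hlast⟩ := h
          have hi1i : (i1 : ℕ) ≠ (i : ℕ) := fun hh => hne' (Fin.ext hh)
          have hi13 := i1.isLt
          have hor : (i1 : ℕ) = (ia : ℕ) ∨ (i1 : ℕ) = (ib : ℕ) := by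
            rw [hiaval, hibval]
            split_ifs <;> omega
          simp only [Finset.mem_insert, Finset.mem_singleton]
          rcases hor with hv' | hv'
          · left
            have hveq : i1 = ia := Fin.ext hv'
            subst i1
            rw [inr_eq_inr]
            refine ⟨rfl, ?_⟩
            simp only [Fin.val_mk]
            omega
          · right
            have hveq : i1 = ib := Fin.ext hv'
            subst i1
            rw [inr_eq_inr]
            refine ⟨rfl, ?_⟩
            simp only [Fin.val_mk]
            omega
      exact (Finset.card_le_card hsub).trans ((Finset.card_insert_le _ _).trans (by simp))
  -- the product bound
  have hdg12 : ∀ v, dg l1 l2 l3 i k v = 1 ∨ dg l1 l2 l3 i k v = 2 := by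
    intro v
    rcases v with (_ | _) | ⟨i0, j0⟩ <;> simp only [dg] <;> split_ifs <;> simp
  have hprod : (m - 1) ^ (l1 + l2 + l3 - 5) * (m - 2) ^ 2 ≤
      ∏ v ∈ U₀, ((L v).card - dg l1 l2 l3 i k v) := by
    have hrwL : ∏ v ∈ U₀, ((L v).card - dg l1 l2 l3 i k v) =
        ∏ v ∈ U₀, (m - dg l1 l2 l3 i k v) :=
      Finset.prod_congr rfl (fun v _ => by rw [hL])
    have hp1 : ∏ v ∈ U₀.filter (fun v => dg l1 l2 l3 i k v = 2), (m - dg l1 l2 l3 i k v)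
        = (m - 2) ^ (U₀.filter (fun v => dg l1 l2 l3 i k v = 2)).card := by
      rw [Finset.prod_congr rfl (fun v hv => by rw [(Finset.mem_filter.mp hv).2]),
        Finset.prod_const]
    have hp2 : ∏ v ∈ U₀.filter (fun v => ¬ dg l1 l2 l3 i k v = 2), (m - dg l1 l2 l3 i k v)
        = (m - 1) ^ (U₀.filter (fun v => ¬ dg l1 l2 l3 i k v = 2)).card := by
      have hco : ∀ v ∈ U₀.filter (fun v => ¬ dg l1 l2 l3 i k v = 2),
          m - dg l1 l2 l3 i k v = m - 1 := by
        intro v hv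
        have h2' := (Finset.mem_filter.mp hv).2
        rcases hdg12 v with h | h
        · rw [h]
        · exact absurd h h2'
      rw [Finset.prod_congr rfl hco, Finset.prod_const]
    have hcc := Finset.card_filter_add_card_filter_not
      (s := U₀) (p := fun v => dg l1 l2 l3 i k v = 2)
    rw [hrwL, ← Finset.prod_filter_mul_prod_filter_not U₀ (fun v => dg l1 l2 l3 i k v = 2)
      (fun v => m - dg l1 l2 l3 i k v), hp1, hp2]
    set c2 := (U₀.filter (fun v => dg l1 l2 l3 i k v = 2)).card with hc2def
    set cn := (U₀.filter (fun v => ¬ dg l1 l2 l3 i k v = 2)).card with hcndef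
    have hsum5 : 5 ≤ l1 + l2 + l3 := by omega
    calc (m - 1) ^ (l1 + l2 + l3 - 5) * (m - 2) ^ 2
        = ((m - 2) ^ c2 * (m - 2) ^ (2 - c2)) * (m - 1) ^ (l1 + l2 + l3 - 5) := by
          rw [← pow_add, show c2 + (2 - c2) = 2 by omega]
          ring
      _ ≤ ((m - 2) ^ c2 * (m - 1) ^ (2 - c2)) * (m - 1) ^ (l1 + l2 + l3 - 5) := by
          refine Nat.mul_le_mul_right _ (Nat.mul_le_mul_left _ ?_)
          exact Nat.pow_le_pow_left (by omega) _
      _ = (m - 2) ^ c2 * (m - 1) ^ cn := by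
          rw [mul_assoc, ← pow_add,
            show 2 - c2 + (l1 + l2 + l3 - 5) = cn by omega]
  -- assemble
  set g : ThetaVert l1 l2 l3 → ℕ := fun v => if v = q then x else y with hgdef
  have happly := colSet_card_ge (thetaGraph l1 l2 l3) L (rnk l1 l2 l3 i k)
      (dg l1 l2 l3 i k) U₀ hinj hd U₀.card U₀ le_rfl (Finset.Subset.refl _)
      (fun a ha _ _ _ => ha) g
  have hqnot : q ∉ U₀ := by simp [hU₀def]
  have hsnot : s ∉ U₀ := by simp [hU₀def]
  set T : Finset (ThetaVert l1 l2 l3 → ℕ) := (Fintype.piFinset L).filter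
    (fun f => (ProperLColoring (thetaGraph l1 l2 l3) L f ∧ f q = x ∧ f s = y)) with hTdef
  have hsubT : colSet (thetaGraph l1 l2 l3) L U₀ g ⊆ T := by
    intro f hf
    simp only [colSet, Finset.mem_filter, Fintype.mem_piFinset] at hf
    obtain ⟨hpi, hpr⟩ := hf
    have hfq : f q = x := by
      have h' := hpi q
      rw [if_neg hqnot, Finset.mem_singleton] at h'
      rw [h', hgdef]
      simp
    have hfs : f s = y := by
      have h' := hpi s
      rw [if_neg hsnot, Finset.mem_singleton] at h'
      rw [h', hgdef]
      simp [Ne.symm hneqs]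
    have hLmem : ∀ z, f z ∈ L z := by
      intro z
      by_cases hz : z ∈ U₀
      · have h' := hpi z; rwa [if_pos hz] at h'
      · have hz' : z = q ∨ z = s := by
          have hzin : z ∈ ({q, s} : Finset (ThetaVert l1 l2 l3)) := by
            by_contra hcon
            exact hz (by rw [hU₀def]; exact Finset.mem_sdiff.mpr ⟨Finset.mem_univ _, hcon⟩)
          simpa using hzin
        rcases hz' with rfl | rfl
        · rw [hfq]; exact hx
        · rw [hfs]; exact hy
    have hproper : ∀ ⦃a b⦄, (thetaGraph l1 l2 l3).Adj a b → f a ≠ f b := by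
      intro a b hab
      by_cases ha : a ∈ U₀
      · exact hpr a ha b hab
      · by_cases hb : b ∈ U₀
        · exact (hpr b hb a hab.symm).symm
        · have ha' : a = q ∨ a = s := by
            have hain : a ∈ ({q, s} : Finset (ThetaVert l1 l2 l3)) := by
              by_contra hcon
              exact ha (by rw [hU₀def]; exact Finset.mem_sdiff.mpr ⟨Finset.mem_univ _, hcon⟩)
            simpa using hain
          have hb' : b = q ∨ b = s := by
            have hbin : b ∈ ({q, s} : Finset (ThetaVert l1 l2 l3)) := by
              by_contra hcon
              exact hb (by rw [hU₀def]; exact Finset.mem_sdiff.mpr ⟨Finset.mem_univ _, hcon⟩)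
            simpa using hbin
          rcases ha' with rfl | rfl <;> rcases hb' with rfl | rfl
          · exact absurd rfl hab.ne
          · rw [hfq, hfs]; exact hxy
          · rw [hfs, hfq]; exact Ne.symm hxy
          · exact absurd rfl hab.ne
    rw [hTdef, Finset.mem_filter, Fintype.mem_piFinset]
    exact ⟨hLmem, ⟨hLmem, hproper⟩, hfq, hfs⟩
  have hNat : Nat.card {f : ThetaVert l1 l2 l3 → ℕ //
      ProperLColoring (thetaGraph l1 l2 l3) L f ∧ f q = x ∧ f s = y} = T.card := by
    have e : {f : ThetaVert l1 l2 l3 → ℕ //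
        ProperLColoring (thetaGraph l1 l2 l3) L f ∧ f q = x ∧ f s = y} ≃ {f // f ∈ T} :=
      Equiv.subtypeEquivRight (fun f => by
        rw [hTdef, Finset.mem_filter, Fintype.mem_piFinset]
        exact ⟨fun h => ⟨h.1.1, h⟩, fun h => h.2⟩)
    rw [Nat.card_congr e, Nat.card_eq_finsetCard]
  rw [hNat]
  calc (m - 1) ^ (l1 + l2 + l3 - 5) * (m - 2) ^ 2
      ≤ ∏ v ∈ U₀, ((L v).card - dg l1 l2 l3 i k v) := hprod
    _ ≤ (colSet (thetaGraph l1 l2 l3) L U₀ g).card := happly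
    _ ≤ T.card := Finset.card_le_card hsubT
end

section
/- Let P be a path with k edges (k ∈ ℕ) with end vertices x and y, and let H = (L,H) be a full m-fold cover of P with m ≥ 2. Let u ∈ L(x) and v ∈ L(y). If there is a path in H connecting u and v, then there are exactly ((m−1)^k − (−1)^k)/m + (−1)^k proper H-colorings of P that contain both u and v; otherwise there are exactly ((m−1)^k − (−1)^k)/m such proper H-colorings. -/
open SimpleGraph Finset

/-!
In a full cover the matchings between consecutive lists of the path are perfect, so following
them from `L 0` transports one labelling `L 0 ≃ Fin m` to every list, and an edge of `H` joins two
vertices exactly when they lie in consecutive lists and carry the same label: `H` is `m` disjoint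
copies of the path. Hence `u` and `v` are joined in `H` iff they have the same label, and a proper
`H`-coloring through `u` and `v` is a sequence `a 0, …, a k` of labels with consecutive terms
distinct, `a 0` the label of `u` and `a k` that of `v`. Writing `N k c d` for the number of such
sequences, `N (k + 1) c d = ∑_{e ≠ d} N k c e` and `∑_e N k c e = (m - 1) ^ k`, which gives
`N k c d = ((m - 1) ^ k - (-1) ^ k) / m + [c = d] (-1) ^ k` by induction.
-/

lemma pathGraph_adj_iff_exists {k : ℕ} {a b : Fin (k + 1)} :
    (pathGraph (k + 1)).Adj a b ↔
      ∃ i : Fin k, (a = i.castSucc ∧ b = i.succ) ∨ (a = i.succ ∧ b = i.castSucc) := by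
  rw [pathGraph_adj]
  constructor
  · rintro (h | h)
    · exact ⟨⟨a, by omega⟩, Or.inl ⟨Fin.ext rfl, Fin.ext (by simp [← h])⟩⟩
    · exact ⟨⟨b, by omega⟩, Or.inr ⟨Fin.ext (by simp [← h]), Fin.ext rfl⟩⟩
  · rintro ⟨i, ⟨rfl, rfl⟩ | ⟨rfl, rfl⟩⟩ <;> simp

lemma pathGraph_castSucc_adj_succ {k : ℕ} (i : Fin k) :
    (pathGraph (k + 1)).Adj i.castSucc i.succ :=
  pathGraph_adj_iff_exists.mpr ⟨i, Or.inl ⟨rfl, rfl⟩⟩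

lemma forall_pathGraph_adj_ne_iff {α : Type*} {k : ℕ} (a : Fin (k + 1) → α) :
    (∀ i j, (pathGraph (k + 1)).Adj i j → a i ≠ a j) ↔ ∀ i : Fin k, a i.castSucc ≠ a i.succ := by
  refine ⟨fun h i => h _ _ (pathGraph_castSucc_adj_succ i), fun h i j hij => ?_⟩
  obtain ⟨l, ⟨rfl, rfl⟩ | ⟨rfl, rfl⟩⟩ := pathGraph_adj_iff_exists.mp hij
  exacts [h l, (h l).symm]

def properPathColorings (m k : ℕ) (c d : Fin m) : Finset (Fin (k + 1) → Fin m) :=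
  {a | (∀ i : Fin k, a i.castSucc ≠ a i.succ) ∧ a 0 = c ∧ a (Fin.last k) = d}

lemma mem_properPathColorings {m k : ℕ} {c d : Fin m} {a : Fin (k + 1) → Fin m} :
    a ∈ properPathColorings m k c d ↔
      (∀ i : Fin k, a i.castSucc ≠ a i.succ) ∧ a 0 = c ∧ a (Fin.last k) = d := by
  simp [properPathColorings]

lemma card_properPathColorings_zero (m : ℕ) (c d : Fin m) :
    #(properPathColorings m 0 c d) = if c = d then 1 else 0 := by
  split_ifs with hcd
  · subst hcd
    rw [card_eq_one]
    refine ⟨fun _ => c, ?_⟩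
    ext a
    simp [mem_properPathColorings, funext_iff, Fin.forall_fin_one]
  · rw [card_eq_zero, eq_empty_iff_forall_notMem]
    intro a ha
    rw [mem_properPathColorings] at ha
    exact hcd (ha.2.1.symm.trans ha.2.2)

lemma card_properPathColorings_succ (m k : ℕ) (c d : Fin m) :
    #(properPathColorings m (k + 1) c d) =
      ∑ e ∈ univ.erase d, #(properPathColorings m k c e) := by
  rw [← card_sigma]
  refine card_nbij' (fun a => ⟨a (Fin.last k).castSucc, Fin.init a⟩)
    (fun p => Fin.snoc p.2 d) ?_ ?_ ?_ ?_
  · intro a ha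
    simp only [mem_coe, mem_sigma, mem_erase, mem_univ, and_true, ne_eq,
      mem_properPathColorings] at ha ⊢
    obtain ⟨hne, h0, hlast⟩ := ha
    refine ⟨?_, fun i => ?_, ?_, rfl⟩
    · simpa [hlast] using hne (Fin.last k)
    · simpa [Fin.init] using hne i.castSucc
    · simpa [Fin.init] using h0
  · rintro ⟨e, b⟩ hb
    simp only [mem_coe, mem_sigma, mem_erase, mem_univ, and_true, ne_eq,
      mem_properPathColorings] at hb ⊢
    obtain ⟨hed, hne, h0, hlast⟩ := hb
    refine ⟨fun i => ?_, by simpa using h0, by simp⟩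
    induction i using Fin.lastCases with
    | last => simpa [hlast] using hed
    | cast i =>
      rw [Fin.succ_castSucc, Fin.snoc_castSucc, Fin.snoc_castSucc]
      exact hne i
  · intro a ha
    rw [mem_coe, mem_properPathColorings] at ha
    simp only [← ha.2.2, Fin.snoc_init_self]
  · rintro ⟨e, b⟩ hb
    simp only [mem_coe, mem_sigma, mem_properPathColorings] at hb
    simp [hb.2.2.2]

lemma cast_card_properPathColorings {m : ℕ} (hm : m ≠ 0) (k : ℕ) (c d : Fin m) :
    (#(properPathColorings m k c d) : ℚ) =
      ((m - 1) ^ k - (-1) ^ k) / m + if c = d then (-1) ^ k else 0 := by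
  induction k generalizing d with
  | zero => rw [card_properPathColorings_zero]; split_ifs <;> simp
  | succ k ih =>
    have hsum : ∑ e, (#(properPathColorings m k c e) : ℚ) = (m - 1) ^ k := by
      simp_rw [ih, sum_add_distrib, sum_ite_eq, if_pos (mem_univ c), sum_const, card_univ,
        Fintype.card_fin, nsmul_eq_mul]
      field_simp
      ring
    rw [card_properPathColorings_succ, Nat.cast_sum, sum_erase_eq_sub (mem_univ d), hsum, ih]
    field_simp
    split_ifs <;> ring

namespace DPCover

variable {V W : Type*} {G : SimpleGraph V} (C : DPCover G W)

noncomputable def listIndex (w : W) : V := (C.partition w).choose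

lemma listIndex_eq_iff {w : W} {i : V} : C.listIndex w = i ↔ w ∈ C.L i :=
  ⟨fun h => h ▸ (C.partition w).choose_spec.1,
    fun h => ((C.partition w).choose_spec.2 i h).symm⟩

/-- A trivialization identifies the cover with `m` disjoint copies of `G`, one per color. -/
structure Trivialization (m : ℕ) where
  iso : C.H ≃g G □ (⊥ : SimpleGraph (Fin m))
  mem_L : ∀ w, w ∈ C.L (iso w).1

namespace Trivialization

variable {C} {m : ℕ} (φ : C.Trivialization m)

lemma fst_eq_iff {w : W} {i : V} : (φ.iso w).1 = i ↔ w ∈ C.L i :=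
  ⟨fun h => h ▸ φ.mem_L w, fun h => (C.partition w).unique (φ.mem_L w) h⟩

lemma adj_iff {x y : W} :
    C.H.Adj x y ↔ G.Adj (φ.iso x).1 (φ.iso y).1 ∧ (φ.iso x).2 = (φ.iso y).2 := by
  rw [← φ.iso.map_adj_iff]
  simp [boxProd_adj]

lemma reachable_iff (hG : G.Connected) {x y : W} :
    C.H.Reachable x y ↔ (φ.iso x).2 = (φ.iso y).2 := by
  rw [← φ.iso.reachable_iff, reachable_boxProd, reachable_bot]
  exact and_iff_right (hG.preconnected _ _)

def transversal (a : V → Fin m) : Set W := {w | a (φ.iso w).1 = (φ.iso w).2}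

lemma symm_mem_transversal (a : V → Fin m) (i : V) :
    φ.iso.symm (i, a i) ∈ φ.transversal a := by
  simp [transversal]

lemma eq_symm_of_mem_transversal {a : V → Fin m} {w : W} {i : V}
    (hw : w ∈ φ.transversal a) (hi : w ∈ C.L i) : w = φ.iso.symm (i, a i) := by
  rw [RelIso.eq_symm_apply, ← (φ.fst_eq_iff).mpr hi]
  exact Prod.ext rfl hw.symm

lemma isProperColoring_transversal_iff (a : V → Fin m) :
    C.IsProperColoring (φ.transversal a) ↔ ∀ i j, G.Adj i j → a i ≠ a j := by
  have htrans : ∀ i, ∃! w, w ∈ φ.transversal a ∧ w ∈ C.L i := fun i =>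
    ⟨φ.iso.symm (i, a i),
      ⟨φ.symm_mem_transversal a i, by simpa using φ.mem_L (φ.iso.symm (i, a i))⟩,
      fun w hw => φ.eq_symm_of_mem_transversal hw.1 hw.2⟩
  simp only [IsProperColoring, htrans, implies_true, true_and]
  constructor
  · intro hind i j hij hija
    refine hind (φ.symm_mem_transversal a i) (φ.symm_mem_transversal a j) ?_
    simpa [φ.adj_iff] using ⟨hij, hija⟩
  · intro hprop x y hx hy hxy
    rw [φ.adj_iff] at hxy
    exact hprop _ _ hxy.1 (hx.trans (hxy.2.trans hy.symm))

lemma transversal_injective : Function.Injective φ.transversal := by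
  intro a b hab
  funext i
  have := φ.symm_mem_transversal a i
  rw [hab] at this
  simpa [transversal] using this.symm

lemma exists_transversal_eq {T : Set W} (hT : C.IsProperColoring T) :
    ∃ a, φ.transversal a = T := by
  choose w hw hw_unique using hT.1
  refine ⟨fun i => (φ.iso (w i)).2, Set.ext fun x => ?_⟩
  have hx : x ∈ C.L (φ.iso x).1 := φ.mem_L x
  constructor
  · intro hax
    have : φ.iso x = φ.iso (w (φ.iso x).1) :=
      Prod.ext ((φ.fst_eq_iff).mpr (hw _).2).symm hax.symm
    rw [φ.iso.injective this]
    exact (hw _).1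
  · intro hxT
    exact congrArg (fun y => (φ.iso y).2) (hw_unique _ x ⟨hxT, hx⟩).symm

lemma card_isProperColoring_mem_mem (u v : W) :
    Nat.card {T : Set W // C.IsProperColoring T ∧ u ∈ T ∧ v ∈ T} =
      Nat.card {a : V → Fin m // (∀ i j, G.Adj i j → a i ≠ a j) ∧
        a (φ.iso u).1 = (φ.iso u).2 ∧ a (φ.iso v).1 = (φ.iso v).2} := by
  refine (Nat.card_congr (Equiv.ofBijective (fun a => ⟨φ.transversal a.1,
    (φ.isProperColoring_transversal_iff _).mpr a.2.1, a.2.2⟩) ⟨?_, ?_⟩)).symm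
  · exact fun a b hab => Subtype.ext (φ.transversal_injective (congrArg Subtype.val hab))
  · rintro ⟨T, hT, huT, hvT⟩
    obtain ⟨a, rfl⟩ := φ.exists_transversal_eq hT
    exact ⟨⟨a, (φ.isProperColoring_transversal_iff a).mp hT, huT, hvT⟩, rfl⟩

noncomputable def ofLabel (E : ∀ i, C.L i ≃ Fin m)
    (hE : ∀ ⦃i j⦄, G.Adj i j → ∀ (x : C.L i) (y : C.L j), C.H.Adj x y ↔ E i x = E j y) :
    C.Trivialization m where
  iso :=
    { toEquiv := (Equiv.sigmaFiberEquiv C.listIndex).symm.trans <|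
        (Equiv.sigmaCongrRight fun i =>
          (Equiv.subtypeEquivRight fun _ => C.listIndex_eq_iff).trans (E i)).trans <|
        Equiv.sigmaEquivProd V (Fin m)
      map_rel_iff' := by
        intro x y
        simp only [boxProd_adj, bot_adj, false_and, or_false]
        constructor
        · rintro ⟨hxy, hlabel⟩
          exact (hE hxy ⟨x, _⟩ ⟨y, _⟩).mpr hlabel
        · intro hxy
          obtain ⟨i, j, hij, hx, hy⟩ := C.cross hxy
          obtain rfl := C.listIndex_eq_iff.mpr hx
          obtain rfl := C.listIndex_eq_iff.mpr hy
          exact ⟨hij, (hE hij ⟨x, hx⟩ ⟨y, hy⟩).mp hxy⟩ }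
  mem_L w := C.listIndex_eq_iff.mp rfl

end Trivialization

end DPCover

namespace DPCover.IsFull

section

variable {V W : Type*} {G : SimpleGraph V} {C : DPCover G W} (hC : C.IsFull)

noncomputable def matchFun {i j : V} (hij : G.Adj i j) (x : C.L i) : C.L j :=
  ⟨(hC hij x x.2).exists.choose, (hC hij x x.2).exists.choose_spec.1⟩

lemma adj_iff_matchFun_eq {i j : V} (hij : G.Adj i j) (x : C.L i) (y : C.L j) :
    C.H.Adj x y ↔ hC.matchFun hij x = y :=
  ⟨fun h => Subtype.ext ((hC hij x x.2).unique (hC hij x x.2).exists.choose_spec ⟨y.2, h⟩),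
    fun h => h ▸ (hC hij x x.2).exists.choose_spec.2⟩

noncomputable def matchEquiv {i j : V} (hij : G.Adj i j) : C.L i ≃ C.L j where
  toFun := hC.matchFun hij
  invFun := hC.matchFun hij.symm
  left_inv x :=
    (hC.adj_iff_matchFun_eq _ _ _).mp ((hC.adj_iff_matchFun_eq hij x _).mpr rfl).symm
  right_inv y :=
    (hC.adj_iff_matchFun_eq _ _ _).mp ((hC.adj_iff_matchFun_eq hij.symm y _).mpr rfl).symm

lemma adj_iff_matchEquiv_eq {i j : V} (hij : G.Adj i j) (x : C.L i) (y : C.L j) :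
    C.H.Adj x y ↔ hC.matchEquiv hij x = y :=
  hC.adj_iff_matchFun_eq hij x y

end

variable {k m : ℕ} {W : Type*} {C : DPCover (pathGraph (k + 1)) W} (hC : C.IsFull)

noncomputable def transport : ∀ i, C.L 0 ≃ C.L i :=
  Fin.induction (Equiv.refl _) fun i e => e.trans (hC.matchEquiv (pathGraph_castSucc_adj_succ i))

lemma transport_succ (i : Fin k) :
    hC.transport i.succ =
      (hC.transport i.castSucc).trans (hC.matchEquiv (pathGraph_castSucc_adj_succ i)) :=
  Fin.induction_succ _ _ i

lemma adj_iff_transport_symm_eq (i : Fin k) (x : C.L i.castSucc) (y : C.L i.succ) :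
    C.H.Adj x y ↔ (hC.transport i.castSucc).symm x = (hC.transport i.succ).symm y := by
  rw [transport_succ, Equiv.symm_trans_apply,
    EmbeddingLike.apply_eq_iff_eq, Equiv.eq_symm_apply, hC.adj_iff_matchEquiv_eq]

noncomputable def pathTrivialization (e : C.L 0 ≃ Fin m) : C.Trivialization m :=
  .ofLabel (fun i => (hC.transport i).symm.trans e) fun i j hij x y => by
    obtain ⟨l, ⟨rfl, rfl⟩ | ⟨rfl, rfl⟩⟩ := pathGraph_adj_iff_exists.mp hij
    · simp [hC.adj_iff_transport_symm_eq]
    · simp [C.H.adj_comm x, hC.adj_iff_transport_symm_eq, eq_comm]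

end DPCover.IsFull

theorem path_full_cover_coloring_count_general (k : ℕ) (m : ℕ) (hm : 2 ≤ m)
    {W : Type*} (C : DPCover (pathGraph (k + 1)) W) (hfull : C.IsFull)
    (hcard : ∀ v, Nat.card ↥(C.L v) = m)
    (u v : W) (hu : u ∈ C.L 0) (hv : v ∈ C.L (Fin.last k)) :
    (C.H.Reachable u v →
      (Nat.card {T : Set W // C.IsProperColoring T ∧ u ∈ T ∧ v ∈ T} : ℚ) =
        ((m - 1) ^ k - (-1) ^ k) / m + (-1) ^ k) ∧
    (¬ C.H.Reachable u v →
      (Nat.card {T : Set W // C.IsProperColoring T ∧ u ∈ T ∧ v ∈ T} : ℚ) =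
        ((m - 1) ^ k - (-1) ^ k) / m) := by
  have hm0 : m ≠ 0 := by omega
  have : Finite (C.L 0) := Nat.finite_of_card_ne_zero (hcard 0 ▸ hm0)
  let φ := hfull.pathTrivialization (Finite.equivFinOfCardEq (hcard 0))
  have hcount : Nat.card {T : Set W // C.IsProperColoring T ∧ u ∈ T ∧ v ∈ T} =
      #(properPathColorings m k (φ.iso u).2 (φ.iso v).2) := by
    rw [φ.card_isProperColoring_mem_mem, φ.fst_eq_iff.mpr hu, φ.fst_eq_iff.mpr hv]
    simp_rw [forall_pathGraph_adj_ne_iff]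
    rw [Nat.card_eq_fintype_card, Fintype.card_subtype]
    rfl
  rw [hcount, φ.reachable_iff (pathGraph_connected k), cast_card_properPathColorings hm0]
  exact ⟨fun h => by rw [if_pos h], fun h => by rw [if_neg h, add_zero]⟩

theorem path_full_cover_coloring_count (k : ℕ) (hk : 1 ≤ k) (m : ℕ) (hm : 2 ≤ m)
    {W : Type*} (C : DPCover (pathGraph (k + 1)) W) (hfull : C.IsFull)
    (hcard : ∀ v, Nat.card ↥(C.L v) = m)
    (u v : W) (hu : u ∈ C.L 0) (hv : v ∈ C.L (Fin.last k)) :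
    (C.H.Reachable u v →
      (Nat.card {T : Set W // C.IsProperColoring T ∧ u ∈ T ∧ v ∈ T} : ℚ) =
        ((m - 1) ^ k - (-1) ^ k) / m + (-1) ^ k) ∧
    (¬ C.H.Reachable u v →
      (Nat.card {T : Set W // C.IsProperColoring T ∧ u ∈ T ∧ v ∈ T} : ℚ) =
        ((m - 1) ^ k - (-1) ^ k) / m) :=
  path_full_cover_coloring_count_general k m hm C hfull hcard u v hu hv
end

section
/- Let P be a path with k edges (k ∈ ℕ) whose vertices in order are x_0, x_1, …, x_k, and let L be an m-assignment for P with m ≥ 2. For each (c,d) ∈ L(x_0) × L(x_k), let N(c,d) be the number of proper L-colorings of P coloring x_0 with c and x_k with d. Then for every (c,d) ∈ L(x_0) × L(x_k), N(c,d) ≥ min{ ((m−1)^k − (−1)^k)/m , ((m−1)^k − (−1)^k)/m + (−1)^k }. -/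
open SimpleGraph Finset

/-!
Let `N_j(e)` count the proper colourings of `x_0, …, x_j` with `x_0 ↦ c` and `x_j ↦ e`, so that
`N_{j+1}(e) = ∑_{e' ∈ L(x_j), e' ≠ e} N_j(e')`, and let `a_j = ((m-1)^j - (-1)^j)/m`, which
satisfies `a_{j+1} = (m-1) a_j + (-1)^j`. By induction on `j`: for even `j`, `N_j ≥ a_j` on
`L(x_j)`; for odd `j`, `N_j ≥ a_j` on `L(x_j)` except at one colour `δ`, where
`N_j(δ) ≥ a_j - 1`. From odd to even `j`, a sum of `m - 1` values loses at most the one at `δ`.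
From even to odd `j`, the `∑_e N_j(e) ≥ (m-1)^j = m a_j + 1` colourings force some colour `δ`
with `N_j(δ) > a_j`, and every `e ≠ δ` collects that surplus.
-/

/-- `((m - 1) ^ j - (-1) ^ j) / m`: the number of proper `m`-colourings of a path with `j` edges
whose ends receive two prescribed distinct colours. -/
def pathDistinctCount (m : ℕ) : ℕ → ℤ
  | 0 => 0
  | j + 1 => (m - 1) * pathDistinctCount m j + (-1) ^ j

theorem mul_pathDistinctCount (m j : ℕ) :
    m * pathDistinctCount m j = ((m : ℤ) - 1) ^ j - (-1) ^ j := by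
  induction j with
  | zero => simp [pathDistinctCount]
  | succ j ih =>
    rw [pathDistinctCount, mul_add, ← mul_assoc, mul_comm (m : ℤ), mul_assoc, ih]
    ring

theorem pathDistinctCount_nonneg {m : ℕ} (hm : 2 ≤ m) (j : ℕ) : 0 ≤ pathDistinctCount m j := by
  have hpow : 1 ≤ ((m : ℤ) - 1) ^ j := one_le_pow₀ (by omega)
  have hsign : (-1 : ℤ) ^ j ≤ 1 := by rcases neg_one_pow_eq_or ℤ j with h | h <;> simp [h]
  have : 0 ≤ (m : ℤ) * pathDistinctCount m j := by rw [mul_pathDistinctCount]; linarith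
  exact nonneg_of_mul_nonneg_right this (by omega)

theorem pathDistinctCount_eq_div {m : ℕ} (hm : m ≠ 0) (j : ℕ) :
    (pathDistinctCount m j : ℚ) = (((m : ℚ) - 1) ^ j - (-1) ^ j) / m := by
  rw [eq_div_iff (by exact_mod_cast hm), mul_comm]
  exact_mod_cast mul_pathDistinctCount m j

theorem mul_add_ite_le_sum_erase {A : Finset ℕ} {m : ℕ} (hA : A.card = m) {a : ℤ} (ha : 0 ≤ a)
    {N : ℕ → ℤ} {δ : ℕ} {t : ℤ} (hN : ∀ e ∈ A, a + (if e = δ then t else 0) ≤ N e) (d : ℕ) :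
    (m - 1) * a + (if δ ∈ A.erase d then t else 0) ≤ ∑ e ∈ A.erase d, N e := by
  have hcard : (m : ℤ) - 1 ≤ (A.erase d).card := by
    have := Finset.pred_card_le_card_erase (s := A) (a := d)
    omega
  calc (m - 1) * a + (if δ ∈ A.erase d then t else 0)
      ≤ (A.erase d).card * a + (if δ ∈ A.erase d then t else 0) := by gcongr
    _ = ∑ e ∈ A.erase d, (a + if e = δ then t else 0) := by
      rw [Finset.sum_add_distrib, Finset.sum_const, Finset.sum_ite_eq', nsmul_eq_mul]
    _ ≤ ∑ e ∈ A.erase d, N e :=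
      Finset.sum_le_sum fun e he => hN e (Finset.mem_of_mem_erase he)

section PathColorings

variable {k : ℕ}

theorem properLColoring_pathGraph_iff {L : Fin (k + 1) → Finset ℕ} {f : Fin (k + 1) → ℕ} :
    ProperLColoring (pathGraph (k + 1)) L f ↔
      (∀ i, f i ∈ L i) ∧ ∀ i : Fin k, f i.castSucc ≠ f i.succ := by
  refine and_congr_right fun _ => ⟨fun h i => h (pathGraph_adj.2 (Or.inl (by simp))), ?_⟩
  intro h
  have step : ∀ u w : Fin (k + 1), u.val + 1 = w.val → f u ≠ f w := fun u w huw => by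
    convert h ⟨u, by omega⟩ using 2 <;> ext <;> simp [huw]
  intro u w huw
  rcases pathGraph_adj.1 huw with huw | hwu
  · exact step u w huw
  · exact (step w u hwu).symm

theorem properLColoring_pathGraph_succ_iff {L : Fin (k + 2) → Finset ℕ} {f : Fin (k + 2) → ℕ} :
    ProperLColoring (pathGraph (k + 2)) L f ↔
      ProperLColoring (pathGraph (k + 1)) (Fin.init L) (Fin.init f) ∧
        f (Fin.last (k + 1)) ∈ L (Fin.last (k + 1)) ∧
        f (Fin.last k).castSucc ≠ f (Fin.last (k + 1)) := by
  simp only [properLColoring_pathGraph_iff, Fin.forall_fin_succ' (n := k + 1),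
    Fin.forall_fin_succ' (n := k), Fin.init, Fin.succ_castSucc, Fin.succ_last]
  tauto

instance {V : Type*} [Finite V] (G : SimpleGraph V) (L : V → Finset ℕ) (p : (V → ℕ) → Prop) :
    Finite {f : V → ℕ // ProperLColoring G L f ∧ p f} :=
  Finite.of_injective (fun f v => (⟨f.1 v, f.2.1.1 v⟩ : L v))
    fun _ _ h => Subtype.ext (funext fun v => congrArg Subtype.val (congrFun h v))

noncomputable def endCount (L : Fin (k + 1) → Finset ℕ) (c d : ℕ) : ℕ :=
  Nat.card {f : Fin (k + 1) → ℕ //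
    ProperLColoring (pathGraph (k + 1)) L f ∧ f 0 = c ∧ f (Fin.last k) = d}

def endColoringsSuccEquiv (L : Fin (k + 2) → Finset ℕ) (c : ℕ) {d : ℕ}
    (hd : d ∈ L (Fin.last (k + 1))) :
    {f : Fin (k + 2) → ℕ //
        ProperLColoring (pathGraph (k + 2)) L f ∧ f 0 = c ∧ f (Fin.last (k + 1)) = d} ≃
      Σ e : (Fin.init L (Fin.last k)).erase d, {g : Fin (k + 1) → ℕ //
        ProperLColoring (pathGraph (k + 1)) (Fin.init L) g ∧ g 0 = c ∧ g (Fin.last k) = e} where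
  toFun f :=
    have hf := properLColoring_pathGraph_succ_iff.1 f.2.1
    ⟨⟨f.1 (Fin.last k).castSucc,
        Finset.mem_erase.2 ⟨fun h => hf.2.2 (h.trans f.2.2.2.symm), hf.1.1 _⟩⟩,
      Fin.init f.1, hf.1, f.2.2.1, rfl⟩
  invFun g :=
    ⟨Fin.snoc g.2.1 d, by
      obtain ⟨⟨e, he⟩, g, hg, hg0, hgl⟩ := g
      refine ⟨properLColoring_pathGraph_succ_iff.2 ?_, ?_, Fin.snoc_last _ _⟩
      · simp only [Fin.init_snoc, Fin.snoc_last, Fin.snoc_castSucc, hgl]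
        exact ⟨hg, hd, Finset.ne_of_mem_erase he⟩
      · have h0 := Fin.snoc_castSucc (α := fun _ => ℕ) d g 0
        rw [Fin.castSucc_zero] at h0
        exact h0.trans hg0⟩
  left_inv := by
    rintro ⟨f, -, -, rfl⟩
    exact Subtype.ext (Fin.snoc_init_self f)
  right_inv g := Sigma.subtype_ext (Subtype.ext (by simp [g.2.2.2.2])) (by simp)

theorem endCount_succ (L : Fin (k + 2) → Finset ℕ) (c : ℕ) {d : ℕ}
    (hd : d ∈ L (Fin.last (k + 1))) :
    endCount L c d = ∑ e ∈ (Fin.init L (Fin.last k)).erase d, endCount (Fin.init L) c e := by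
  rw [endCount, Nat.card_congr (endColoringsSuccEquiv L c hd), Nat.card_sigma]
  exact Finset.sum_coe_sort _ (fun e => endCount (Fin.init L) c e)

end PathColorings

section Bounds

variable {k m c : ℕ}

theorem pow_le_sum_endCount {L : Fin (k + 1) → Finset ℕ} (hL : ∀ i, (L i).card = m)
    (hc : c ∈ L 0) : (m - 1) ^ k ≤ ∑ e ∈ L (Fin.last k), endCount L c e := by
  induction k with
  | zero =>
    have hconst : ProperLColoring (pathGraph 1) L (fun _ => c) :=
      properLColoring_pathGraph_iff.2 ⟨fun i => by rwa [Fin.fin_one_eq_zero i], finZeroElim⟩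
    have : 0 < endCount L c c := Nat.card_pos_iff.2 ⟨⟨⟨_, hconst, rfl, rfl⟩⟩, inferInstance⟩
    simpa using Finset.single_le_sum (fun _ _ => Nat.zero_le _) hc |>.trans' this
  | succ k ih =>
    set A := Fin.init L (Fin.last k)
    calc (m - 1) ^ (k + 1) = (m - 1) * (m - 1) ^ k := pow_succ' _ _
      _ ≤ (m - 1) * ∑ e ∈ A, endCount (Fin.init L) c e :=
        Nat.mul_le_mul_left _ (ih (fun i => hL _) hc)
      _ ≤ ∑ e ∈ A, ((L (Fin.last (k + 1))).erase e).card * endCount (Fin.init L) c e := by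
        rw [Finset.mul_sum]
        gcongr with e
        simpa [hL] using Finset.pred_card_le_card_erase (s := L (Fin.last (k + 1))) (a := e)
      _ = ∑ d ∈ L (Fin.last (k + 1)), ∑ e ∈ A.erase d, endCount (Fin.init L) c e := by
        simp_rw [← smul_eq_mul, ← Finset.sum_const]
        refine Finset.sum_comm' fun e d => ?_
        simp only [Finset.mem_erase]
        tauto
      _ = ∑ d ∈ L (Fin.last (k + 1)), endCount L c d :=
        Finset.sum_congr rfl fun d hd => (endCount_succ L c hd).symm

theorem exists_lower_bound_endCount_succ_of_even (hm : 2 ≤ m) {L : Fin (k + 2) → Finset ℕ}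
    (hL : ∀ i, (L i).card = m) (hc : c ∈ L 0) (hk : Even k)
    (hN : ∀ e ∈ Fin.init L (Fin.last k), pathDistinctCount m k ≤ endCount (Fin.init L) c e) :
    ∃ δ, ∀ d ∈ L (Fin.last (k + 1)),
      pathDistinctCount m (k + 1) + (if d = δ then -1 else 0) ≤ endCount L c d := by
  set A := Fin.init L (Fin.last k)
  have hA : A.card = m := hL _
  have htot : ∑ _e ∈ A, pathDistinctCount m k < ∑ e ∈ A, (endCount (Fin.init L) c e : ℤ) := by
    have hpow : ((m : ℤ) - 1) ^ k ≤ ∑ e ∈ A, (endCount (Fin.init L) c e : ℤ) := by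
      have hcast : ((m - 1 : ℕ) : ℤ) = m - 1 := by omega
      rw [← hcast]
      exact_mod_cast pow_le_sum_endCount (L := Fin.init L) (fun i => hL _) hc
    rw [Finset.sum_const, hA, nsmul_eq_mul]
    linarith [mul_pathDistinctCount m k, hk.neg_one_pow (α := ℤ)]
  obtain ⟨δ, hδA, hδ⟩ := Finset.exists_lt_of_sum_lt htot
  have hN' : ∀ e ∈ A, pathDistinctCount m k + (if e = δ then 1 else 0)
      ≤ (endCount (Fin.init L) c e : ℤ) := by
    intro e he
    split_ifs with h
    · subst h; omega
    · simpa using hN e he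
  refine ⟨δ, fun d hd => ?_⟩
  have hsum := mul_add_ite_le_sum_erase hA (pathDistinctCount_nonneg hm k) hN' d
  rw [endCount_succ L c hd, Nat.cast_sum, pathDistinctCount, hk.neg_one_pow]
  by_cases hdδ : d = δ
  · subst hdδ
    simpa using hsum
  · have hδd : δ ∈ A.erase d := Finset.mem_erase.2 ⟨Ne.symm hdδ, hδA⟩
    simp only [hδd, hdδ, if_true, if_false] at hsum ⊢
    linarith

theorem lower_bound_endCount_succ_of_odd (hm : 2 ≤ m) {L : Fin (k + 2) → Finset ℕ}
    (hL : ∀ i, (L i).card = m) (hk : Odd k) {δ : ℕ}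
    (hN : ∀ e ∈ Fin.init L (Fin.last k),
      pathDistinctCount m k + (if e = δ then -1 else 0) ≤ endCount (Fin.init L) c e)
    {d : ℕ} (hd : d ∈ L (Fin.last (k + 1))) :
    pathDistinctCount m (k + 1) ≤ endCount L c d := by
  have hsum := mul_add_ite_le_sum_erase (A := Fin.init L (Fin.last k)) (hL _)
    (pathDistinctCount_nonneg hm k) hN d
  rw [endCount_succ L c hd, Nat.cast_sum, pathDistinctCount, hk.neg_one_pow]
  split_ifs at hsum <;> linarith

theorem endCount_lower_bound (hm : 2 ≤ m) {L : Fin (k + 1) → Finset ℕ}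
    (hL : ∀ i, (L i).card = m) (hc : c ∈ L 0) :
    (Even k → ∀ d ∈ L (Fin.last k), pathDistinctCount m k ≤ endCount L c d) ∧
      (Odd k → ∃ δ, ∀ d ∈ L (Fin.last k),
        pathDistinctCount m k + (if d = δ then -1 else 0) ≤ endCount L c d) := by
  induction k with
  | zero => simp [pathDistinctCount]
  | succ k ih =>
    obtain ⟨hev, hodd⟩ := ih (L := Fin.init L) (fun i => hL _) hc
    rcases Nat.even_or_odd k with hk | hk
    · exact ⟨fun h => absurd h (Nat.not_even_iff_odd.2 hk.add_one),
        fun _ => exists_lower_bound_endCount_succ_of_even hm hL hc hk (hev hk)⟩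
    · obtain ⟨δ, hδ⟩ := hodd hk
      exact ⟨fun _ d hd => lower_bound_endCount_succ_of_odd hm hL hk hδ hd,
        fun h => absurd h (Nat.not_odd_iff_even.2 hk.add_one)⟩

theorem min_le_endCount (hm : 2 ≤ m) {L : Fin (k + 1) → Finset ℕ}
    (hL : ∀ i, (L i).card = m) (hc : c ∈ L 0) {d : ℕ} (hd : d ∈ L (Fin.last k)) :
    min (pathDistinctCount m k) (pathDistinctCount m k + (-1) ^ k) ≤ endCount L c d := by
  obtain ⟨hev, hodd⟩ := endCount_lower_bound hm hL hc
  rcases Nat.even_or_odd k with hk | hk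
  · exact (min_le_left _ _).trans (hev hk d hd)
  · obtain ⟨δ, hδ⟩ := hodd hk
    have := hδ d hd
    rw [hk.neg_one_pow]
    split_ifs at this <;> omega

end Bounds

theorem path_list_coloring_count_lower_bound_general (k : ℕ) (m : ℕ) (hm : 2 ≤ m)
    (L : Fin (k + 1) → Finset ℕ) (hL : ∀ v, (L v).card = m)
    (c d : ℕ) (hc : c ∈ L 0) (hd : d ∈ L (Fin.last k)) :
    min ((((m : ℚ) - 1) ^ k - (-1) ^ k) / m)
        ((((m : ℚ) - 1) ^ k - (-1) ^ k) / m + (-1) ^ k) ≤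
      (Nat.card {f : Fin (k + 1) → ℕ // ProperLColoring (pathGraph (k + 1)) L f ∧
        f 0 = c ∧ f (Fin.last k) = d} : ℚ) := by
  rw [← pathDistinctCount_eq_div (by omega)]
  exact_mod_cast min_le_endCount hm hL hc hd

theorem path_list_coloring_count_lower_bound (k : ℕ) (hk : 1 ≤ k) (m : ℕ) (hm : 2 ≤ m)
    (L : Fin (k + 1) → Finset ℕ) (hL : ∀ v, (L v).card = m)
    (c d : ℕ) (hc : c ∈ L 0) (hd : d ∈ L (Fin.last k)) :
    min ((((m : ℚ) - 1) ^ k - (-1) ^ k) / m)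
        ((((m : ℚ) - 1) ^ k - (-1) ^ k) / m + (-1) ^ k) ≤
      (Nat.card {f : Fin (k + 1) → ℕ // ProperLColoring (pathGraph (k + 1)) L f ∧
        f 0 = c ∧ f (Fin.last k) = d} : ℚ) :=
  path_list_coloring_count_lower_bound_general k m hm L hL c d hc hd
end
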